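/- arXiv:2508.01143 — 9 statements merged into one kernel-verified Lean document; each statement's English description precedes it below -/
import Mathlib

section
/- Let q be an odd prime power and let a₁, a₃ ∈ 𝔽_q be both nonzero. Then for any a₄, a₅, b₁, b₂, b₃, b₄, b₅ ∈ 𝔽_q, the map F : 𝔽_q² → 𝔽_q² given by F(x,y) = (a₁x² + a₃y² + a₄x + a₅y, b₁x² + b₂xy + b₃y² + b₄x + b₅y) is not a bijection. -/
/-- For an odd prime power q and a₁, a₃ ∈ 𝔽_q both nonzero, the quadratic system
F(x,y) = (a₁x² + a₃y² + a₄x + a₅y, b₁x² + b₂xy + b₃y² + b₄x + b₅y) is never a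
bijection of 𝔽_q². -/
theorem stmt_0 {F : Type*} [Field F] [Fintype F] (hodd : Odd (Fintype.card F))
    (a₁ a₃ a₄ a₅ b₁ b₂ b₃ b₄ b₅ : F) (ha₁ : a₁ ≠ 0) (ha₃ : a₃ ≠ 0) :
    ¬ Function.Bijective (fun p : F × F =>
      (a₁ * p.1 ^ 2 + a₃ * p.2 ^ 2 + a₄ * p.1 + a₅ * p.2,
       b₁ * p.1 ^ 2 + b₂ * p.1 * p.2 + b₃ * p.2 ^ 2 + b₄ * p.1 + b₅ * p.2)) := by
  intro hF
  classical
  have h2 : (2 : F) ≠ 0 := by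
    apply Ring.two_ne_zero
    intro h
    have h' := FiniteField.even_card_of_char_two h
    obtain ⟨k, hk⟩ := hodd
    omega
  set q := Fintype.card F with hq
  have hq1 : 1 < q := Fintype.one_lt_card
  set s := a₄ / (2 * a₁) with hs
  set t := a₅ / (2 * a₃) with ht
  set c₀ := -(a₁ * s ^ 2 + a₃ * t ^ 2) with hc
  set f := fun p : F × F =>
      (a₁ * p.1 ^ 2 + a₃ * p.2 ^ 2 + a₄ * p.1 + a₅ * p.2,
       b₁ * p.1 ^ 2 + b₂ * p.1 * p.2 + b₃ * p.2 ^ 2 + b₄ * p.1 + b₅ * p.2) with hf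
  have key : ∀ x y : F, a₁ * x ^ 2 + a₃ * y ^ 2 + a₄ * x + a₅ * y - c₀
      = a₁ * (x + s) ^ 2 + a₃ * (y + t) ^ 2 := by
    intro x y
    rw [hc, hs, ht]
    field_simp
    ring
  have e1 : {p : F × F // (f p).1 = c₀} ≃ F :=
    ((Equiv.ofBijective f hF).subtypeEquiv (q := fun r => r.1 = c₀) (fun p => Iff.rfl)).trans
      { toFun := fun q => q.1.2
        invFun := fun y => ⟨(c₀, y), rfl⟩
        left_inv := fun q => Subtype.ext (by
          obtain ⟨⟨x, y⟩, h⟩ := q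
          simp only at h ⊢
          simp [h])
        right_inv := fun y => rfl }
  have e2 : {p : F × F // (f p).1 = c₀} ≃ {p : F × F // a₁ * p.1 ^ 2 + a₃ * p.2 ^ 2 = 0} :=
    (Equiv.prodCongr (Equiv.addRight s) (Equiv.addRight t)).subtypeEquiv (fun p => by
      show (f p).1 = c₀ ↔ a₁ * (p.1 + s) ^ 2 + a₃ * (p.2 + t) ^ 2 = 0
      rw [← sub_eq_zero (a := (f p).1)]
      show a₁ * p.1 ^ 2 + a₃ * p.2 ^ 2 + a₄ * p.1 + a₅ * p.2 - c₀ = 0 ↔ _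
      rw [key p.1 p.2])
  have hcard : Fintype.card {p : F × F // a₁ * p.1 ^ 2 + a₃ * p.2 ^ 2 = 0} = q :=
    Fintype.card_congr (e2.symm.trans e1)
  by_cases hsq : ∃ w : F, w ^ 2 = -(a₃ / a₁)
  · obtain ⟨w, hw⟩ := hsq
    have hw0 : w ≠ 0 := by
      intro h
      rw [h] at hw
      have h3 : a₃ / a₁ = 0 := by rw [← neg_eq_zero, ← hw]; ring
      rw [div_eq_zero_iff] at h3
      tauto
    have ha3 : a₃ = -(w ^ 2) * a₁ := by rw [hw]; field_simp
    have hpred : ∀ p : F × F,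
        (a₁ * p.1 ^ 2 + a₃ * p.2 ^ 2 = 0) ↔ (p.1 = w * p.2 ∨ p.1 = -(w * p.2)) := by
      intro p
      have hfac : a₁ * p.1 ^ 2 + a₃ * p.2 ^ 2
          = a₁ * ((p.1 - w * p.2) * (p.1 + w * p.2)) := by rw [ha3]; ring
      rw [hfac, mul_eq_zero, mul_eq_zero, sub_eq_zero, add_eq_zero_iff_eq_neg]
      simp [ha₁]
    have hs1 : (Finset.univ.filter (fun p : F × F => p.1 = w * p.2)).card = q := by
      rw [← Fintype.card_subtype]
      exact Fintype.card_congr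
        ⟨fun p => p.1.2, fun v => ⟨(w * v, v), rfl⟩,
         fun p => Subtype.ext (by obtain ⟨⟨x, y⟩, h⟩ := p; simp only at h ⊢; simp [h]),
         fun v => rfl⟩
    have hs2 : (Finset.univ.filter (fun p : F × F => p.1 = -(w * p.2))).card = q := by
      rw [← Fintype.card_subtype]
      exact Fintype.card_congr
        ⟨fun p => p.1.2, fun v => ⟨(-(w * v), v), rfl⟩,
         fun p => Subtype.ext (by obtain ⟨⟨x, y⟩, h⟩ := p; simp only at h ⊢; simp [h]),
         fun v => rfl⟩
    have hinter : (Finset.univ.filter (fun p : F × F => p.1 = w * p.2)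
        ∩ Finset.univ.filter (fun p : F × F => p.1 = -(w * p.2))).card = 1 := by
      rw [← Finset.filter_and]
      have : ∀ p : F × F, (p.1 = w * p.2 ∧ p.1 = -(w * p.2)) ↔ p = (0, 0) := by
        rintro ⟨x, y⟩
        constructor
        · rintro ⟨hxy1, hxy2⟩
          have hy : y = 0 := by
            have : 2 * (w * y) = 0 := by rw [two_mul]; nth_rewrite 1 [← hxy1]; rw [hxy2]; ring
            rcases mul_eq_zero.mp this with h | h
            · exact absurd h h2
            · rcases mul_eq_zero.mp h with h | h
              · exact absurd h hw0
              · exact h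
          subst hy
          simp only [mul_zero] at hxy1
          simp [hxy1]
        · intro h
          simp only [Prod.mk.injEq] at h
          simp [h.1, h.2]
      rw [Finset.filter_congr (fun p _ => this p)]
      rw [Finset.filter_eq']
      simp
    rw [Fintype.card_congr (Equiv.subtypeEquivRight hpred), Fintype.card_subtype] at hcard
    rw [Finset.filter_or] at hcard
    have := Finset.card_union_add_card_inter
      (Finset.univ.filter (fun p : F × F => p.1 = w * p.2))
      (Finset.univ.filter (fun p : F × F => p.1 = -(w * p.2)))
    rw [hcard, hs1, hs2, hinter] at this
    omega
  · have hpred : ∀ p : F × F, (a₁ * p.1 ^ 2 + a₃ * p.2 ^ 2 = 0) ↔ p = (0, 0) := by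
      rintro ⟨x, y⟩
      constructor
      · intro h
        by_cases hy : y = 0
        · subst hy
          simp only [mul_zero, zero_pow two_ne_zero, add_zero] at h
          have hx : x = 0 := by
            rcases (by simpa using h : a₁ = 0 ∨ x = 0) with h' | h'
            · exact absurd h' ha₁
            · exact h'
          simp [hx]
        · exfalso
          apply hsq
          refine ⟨x / y, ?_⟩
          field_simp
          linear_combination y ^ 2 / a₁ * h - h / a₁ * y ^ 2 + h
      · intro h
        simp only [Prod.mk.injEq] at h
        simp [h.1, h.2]
    rw [Fintype.card_congr (Equiv.subtypeEquivRight hpred), Fintype.card_subtype_eq] at hcard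
    omega
end

section
/- Let q = 2^m and a₄, a₅, b₁, b₃, b₄, b₅ ∈ 𝔽_q with a₄ ≠ 0 and a₅ ≠ 0. Then the map F(x,y) = (a₄x + a₅y, b₁x² + b₃y² + b₄x + b₅y) is a bijection of 𝔽_q² if and only if exactly one of the two conditions holds: (a₄b₅ + a₅b₄ = 0) or (a₅²b₁ + a₄²b₃ = 0). -/
/-!
In characteristic 2 squaring is additive, so the map is an additive endomorphism of the finite
group `𝔽_q²` and is bijective iff its kernel is trivial. The first coordinate vanishes exactly on
the line `(a₅ t, a₄ t)`, on which the second coordinate is `A t² + B t` with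
`A = a₅²b₁ + a₄²b₃` and `B = a₄b₅ + a₅b₄`. This has a nonzero root `t` iff both coefficients
vanish (take `t = 1`) or neither does (take `t = -B / A`).
-/

section CharTwo

variable {R : Type*} [CommRing R] [CharP R 2]

def quadraticPairHom (a₄ a₅ b₁ b₃ b₄ b₅ : R) : R × R →+ R × R where
  toFun p := (a₄ * p.1 + a₅ * p.2, b₁ * p.1 ^ 2 + b₃ * p.2 ^ 2 + b₄ * p.1 + b₅ * p.2)
  map_zero' := by simp
  map_add' p q := by
    ext
    · simp only [Prod.fst_add, Prod.snd_add]; ring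
    · simp only [Prod.fst_add, Prod.snd_add, CharTwo.add_sq]; ring

theorem quadraticPairHom_apply (a₄ a₅ b₁ b₃ b₄ b₅ : R) (p : R × R) :
    quadraticPairHom a₄ a₅ b₁ b₃ b₄ b₅ p =
      (a₄ * p.1 + a₅ * p.2, b₁ * p.1 ^ 2 + b₃ * p.2 ^ 2 + b₄ * p.1 + b₅ * p.2) :=
  rfl

theorem quadraticPairHom_apply_mul (a₄ a₅ b₁ b₃ b₄ b₅ t : R) :
    quadraticPairHom a₄ a₅ b₁ b₃ b₄ b₅ (a₅ * t, a₄ * t) =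
      (0, (a₅ ^ 2 * b₁ + a₄ ^ 2 * b₃) * t ^ 2 + (a₄ * b₅ + a₅ * b₄) * t) := by
  rw [quadraticPairHom_apply, Prod.mk.injEq]
  constructor
  · linear_combination a₄ * a₅ * t * CharTwo.two_eq_zero (R := R)
  · ring

end CharTwo

theorem CharTwo.exists_eq_mul_of_mul_add_mul_eq_zero {K : Type*} [Field K] [CharP K 2]
    {a b x y : K} (ha : a ≠ 0) (h : a * x + b * y = 0) :
    ∃ t, x = b * t ∧ y = a * t := by
  refine ⟨y / a, ?_, (mul_div_cancel₀ y ha).symm⟩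
  rw [mul_div_assoc', eq_div_iff ha, ← CharTwo.add_eq_zero]
  linear_combination h

theorem forall_mul_sq_add_mul_eq_zero_imp_iff_xor {K : Type*} [Field K] (A B : K) :
    (∀ t : K, A * t ^ 2 + B * t = 0 → t = 0) ↔ Xor (B = 0) (A = 0) := by
  constructor
  · intro h
    by_cases hB : B = 0 <;> by_cases hA : A = 0
    · exact absurd (h 1 (by simp [hA, hB])) one_ne_zero
    · exact Or.inl ⟨hB, hA⟩
    · exact Or.inr ⟨hA, hB⟩
    · have hroot : A * (-B / A) ^ 2 + B * (-B / A) = 0 := by field_simp; ring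
      exact absurd (h _ hroot) (div_ne_zero (neg_ne_zero.mpr hB) hA)
  · rintro (⟨hB, hA⟩ | ⟨hA, hB⟩) t ht
    · simpa [hB, hA] using ht
    · simpa [hA, hB] using ht

theorem quadraticPairHom_injective_iff {K : Type*} [Field K] [CharP K 2]
    (a₄ a₅ b₁ b₃ b₄ b₅ : K) (ha₄ : a₄ ≠ 0) :
    Function.Injective (quadraticPairHom a₄ a₅ b₁ b₃ b₄ b₅) ↔
      ∀ t : K, (a₅ ^ 2 * b₁ + a₄ ^ 2 * b₃) * t ^ 2 + (a₄ * b₅ + a₅ * b₄) * t = 0 → t = 0 := by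
  rw [injective_iff_map_eq_zero]
  constructor
  · intro h t ht
    have hzero := h (a₅ * t, a₄ * t) (by rw [quadraticPairHom_apply_mul, ht]; rfl)
    exact (mul_eq_zero.mp (congrArg Prod.snd hzero)).resolve_left ha₄
  · rintro h ⟨x, y⟩ hp
    have hline : a₄ * x + a₅ * y = 0 := congrArg Prod.fst hp
    obtain ⟨t, rfl, rfl⟩ := CharTwo.exists_eq_mul_of_mul_add_mul_eq_zero ha₄ hline
    rw [quadraticPairHom_apply_mul, Prod.mk_eq_zero] at hp
    simp [h t hp.2]

theorem stmt_4_general {F : Type*} [Field F] [Fintype F] (m : ℕ)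
    (hcard : Fintype.card F = 2 ^ m)
    (a₄ a₅ b₁ b₃ b₄ b₅ : F) (ha₄ : a₄ ≠ 0) :
    Function.Bijective (fun p : F × F =>
      (a₄ * p.1 + a₅ * p.2,
       b₁ * p.1 ^ 2 + b₃ * p.2 ^ 2 + b₄ * p.1 + b₅ * p.2)) ↔
      Xor' (a₄ * b₅ + a₅ * b₄ = 0) (a₅ ^ 2 * b₁ + a₄ ^ 2 * b₃ = 0) := by
  have : CharP F 2 := charP_of_card_eq_prime_pow hcard
  rw [← Finite.injective_iff_bijective]
  exact (quadraticPairHom_injective_iff a₄ a₅ b₁ b₃ b₄ b₅ ha₄).trans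
    (forall_mul_sq_add_mul_eq_zero_imp_iff_xor _ _)

/-- For q = 2^m, a₄ ≠ 0, a₅ ≠ 0, the map
F(x,y) = (a₄x + a₅y, b₁x² + b₃y² + b₄x + b₅y) is a bijection of 𝔽_q² iff exactly one
of a₄b₅ + a₅b₄ = 0 and a₅²b₁ + a₄²b₃ = 0 holds. -/
theorem stmt_4 {F : Type*} [Field F] [Fintype F] (m : ℕ) (hm : 0 < m)
    (hcard : Fintype.card F = 2 ^ m)
    (a₄ a₅ b₁ b₃ b₄ b₅ : F) (ha₄ : a₄ ≠ 0) (ha₅ : a₅ ≠ 0) :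
    Function.Bijective (fun p : F × F =>
      (a₄ * p.1 + a₅ * p.2,
       b₁ * p.1 ^ 2 + b₃ * p.2 ^ 2 + b₄ * p.1 + b₅ * p.2)) ↔
      Xor' (a₄ * b₅ + a₅ * b₄ = 0) (a₅ ^ 2 * b₁ + a₄ ^ 2 * b₃ = 0) :=
  stmt_4_general m hcard a₄ a₅ b₁ b₃ b₄ b₅ ha₄
end

section
/- Let q = 2^m, and let a₃, a₄, a₅ ∈ 𝔽_q with a₃ ≠ 0, a₄ ≠ 0, and b₁, b₃, b₄, b₅ ∈ 𝔽_q. Set A₁ = b₁a₃²/a₄², C₁ = b₃ + b₁a₅²/a₄² + b₄a₃/a₄, D₁ = b₄a₅/a₄ + b₅. Then the map F(x,y) = (a₃y² + a₄x + a₅y, b₁x² + b₃y² + b₄x + b₅y) is a bijection of 𝔽_q² if and only if the linearized polynomial L₁(y) = A₁y⁴ + C₁y² + D₁y has only the root y = 0 in 𝔽_q. -/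
/-!
In characteristic 2 squaring is additive, so `F(x, y)` is an additive endomorphism of the finite
group `𝔽_q²` and is bijective iff its kernel is trivial. On the kernel the first coordinate forces
`x = (a₃y² + a₅y)/a₄`, and substituting this into the second coordinate gives exactly `L₁(y)`.
-/

theorem FiniteField.ringChar_eq_two_of_card_eq_two_pow {F : Type*} [Field F] [Fintype F] {m : ℕ}
    (hcard : Fintype.card F = 2 ^ m) : ringChar F = 2 := by
  rw [FiniteField.even_card_iff_char_two, hcard]
  cases m with
  | zero => simpa [hcard] using (Fintype.one_lt_card (α := F)).ne'
  | succ m => simp [pow_succ]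

namespace CharTwo

variable {F : Type*} [Field F]

def quadraticMap [CharP F 2] (a₃ a₄ a₅ b₁ b₃ b₄ b₅ : F) : F × F →+ F × F where
  toFun p := (a₃ * p.2 ^ 2 + a₄ * p.1 + a₅ * p.2, b₁ * p.1 ^ 2 + b₃ * p.2 ^ 2 + b₄ * p.1 + b₅ * p.2)
  map_zero' := by simp
  map_add' p q := by ext <;> simp only [Prod.fst_add, Prod.snd_add, add_sq] <;> ring

def linearizedPoly (a₃ a₄ a₅ b₁ b₃ b₄ b₅ y : F) : F :=
  (b₁ * a₃ ^ 2 / a₄ ^ 2) * y ^ 4 + (b₃ + b₁ * a₅ ^ 2 / a₄ ^ 2 + b₄ * a₃ / a₄) * y ^ 2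
    + (b₄ * a₅ / a₄ + b₅) * y

variable [CharP F 2] {a₄ : F} (a₃ a₅ b₁ b₃ b₄ b₅ : F)

theorem quadraticMap_eq_zero_iff (ha₄ : a₄ ≠ 0) (p : F × F) :
    quadraticMap a₃ a₄ a₅ b₁ b₃ b₄ b₅ p = 0 ↔
      p.1 = (a₃ * p.2 ^ 2 + a₅ * p.2) / a₄ ∧ linearizedPoly a₃ a₄ a₅ b₁ b₃ b₄ b₅ p.2 = 0 := by
  obtain ⟨x, y⟩ := p
  have two_eq_zero : (2 : F) = 0 := CharTwo.two_eq_zero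
  have hfst : a₃ * y ^ 2 + a₄ * x + a₅ * y = 0 ↔ x = (a₃ * y ^ 2 + a₅ * y) / a₄ := by
    rw [eq_div_iff ha₄]
    constructor <;> intro h
    · linear_combination h - (a₃ * y ^ 2 + a₅ * y) * two_eq_zero
    · linear_combination h + (a₃ * y ^ 2 + a₅ * y) * two_eq_zero
  have hsnd : b₁ * ((a₃ * y ^ 2 + a₅ * y) / a₄) ^ 2 + b₃ * y ^ 2
      + b₄ * ((a₃ * y ^ 2 + a₅ * y) / a₄) + b₅ * y = linearizedPoly a₃ a₄ a₅ b₁ b₃ b₄ b₅ y := by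
    rw [linearizedPoly, div_pow, add_sq]
    field_simp
    ring
  simp only [quadraticMap, AddMonoidHom.coe_mk, ZeroHom.coe_mk, Prod.mk_eq_zero, hfst]
  exact and_congr_right fun hx => by rw [hx, hsnd]

theorem quadraticMap_bijective_iff [Finite F] (ha₄ : a₄ ≠ 0) :
    Function.Bijective (quadraticMap a₃ a₄ a₅ b₁ b₃ b₄ b₅) ↔
      ∀ y, linearizedPoly a₃ a₄ a₅ b₁ b₃ b₄ b₅ y = 0 → y = 0 := by
  rw [← Finite.injective_iff_bijective, injective_iff_map_eq_zero]
  constructor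
  · intro h y hy
    exact congrArg Prod.snd <| h ((a₃ * y ^ 2 + a₅ * y) / a₄, y)
      ((quadraticMap_eq_zero_iff _ _ _ _ _ _ ha₄ _).2 ⟨rfl, hy⟩)
  · rintro h ⟨x, y⟩ hp
    obtain ⟨hx, hy⟩ := (quadraticMap_eq_zero_iff _ _ _ _ _ _ ha₄ _).1 hp
    obtain rfl := h y hy
    simpa using hx

end CharTwo

theorem stmt_5_general {F : Type*} [Field F] [Fintype F] (m : ℕ)
    (hcard : Fintype.card F = 2 ^ m)
    (a₃ a₄ a₅ b₁ b₃ b₄ b₅ : F) (ha₄ : a₄ ≠ 0) :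
    Function.Bijective (fun p : F × F =>
      (a₃ * p.2 ^ 2 + a₄ * p.1 + a₅ * p.2,
       b₁ * p.1 ^ 2 + b₃ * p.2 ^ 2 + b₄ * p.1 + b₅ * p.2)) ↔
      (∀ y : F,
        (b₁ * a₃ ^ 2 / a₄ ^ 2) * y ^ 4
          + (b₃ + b₁ * a₅ ^ 2 / a₄ ^ 2 + b₄ * a₃ / a₄) * y ^ 2
          + (b₄ * a₅ / a₄ + b₅) * y = 0 → y = 0) := by
  have : CharP F 2 := ringChar.of_eq (FiniteField.ringChar_eq_two_of_card_eq_two_pow hcard)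
  exact CharTwo.quadraticMap_bijective_iff a₃ a₅ b₁ b₃ b₄ b₅ ha₄

/-- For q = 2^m, a₃ ≠ 0, a₄ ≠ 0, the map
F(x,y) = (a₃y² + a₄x + a₅y, b₁x² + b₃y² + b₄x + b₅y) is a bijection of 𝔽_q² iff the
linearized polynomial L₁(y) = A₁y⁴ + C₁y² + D₁y has only the root 0 in 𝔽_q, where
A₁ = b₁a₃²/a₄², C₁ = b₃ + b₁a₅²/a₄² + b₄a₃/a₄, D₁ = b₄a₅/a₄ + b₅. -/
theorem stmt_5 {F : Type*} [Field F] [Fintype F] (m : ℕ) (hm : 0 < m)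
    (hcard : Fintype.card F = 2 ^ m)
    (a₃ a₄ a₅ b₁ b₃ b₄ b₅ : F) (ha₃ : a₃ ≠ 0) (ha₄ : a₄ ≠ 0) :
    Function.Bijective (fun p : F × F =>
      (a₃ * p.2 ^ 2 + a₄ * p.1 + a₅ * p.2,
       b₁ * p.1 ^ 2 + b₃ * p.2 ^ 2 + b₄ * p.1 + b₅ * p.2)) ↔
      (∀ y : F,
        (b₁ * a₃ ^ 2 / a₄ ^ 2) * y ^ 4
          + (b₃ + b₁ * a₅ ^ 2 / a₄ ^ 2 + b₄ * a₃ / a₄) * y ^ 2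
          + (b₄ * a₅ / a₄ + b₅) * y = 0 → y = 0) :=
  stmt_5_general m hcard a₃ a₄ a₅ b₁ b₃ b₄ b₅ ha₄
end

section
/- Let q be a prime power and f₁(x,y) = a₁x³ + a₂x²y + a₃xy² + a₄y³, f₂(x,y) = b₁x³ + b₂x²y + b₃xy² + b₄y³ homogeneous cubics over 𝔽_q such that (f₁, f₂) is a bijection of 𝔽_q². If a₄ = 0, then a₁ ≠ 0 and b₄ ≠ 0. -/
/-- If the homogeneous cubic system (f₁, f₂) with
f₁ = a₁x³ + a₂x²y + a₃xy² + a₄y³, f₂ = b₁x³ + b₂x²y + b₃xy² + b₄y³ is a bijection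
of 𝔽_q² and a₄ = 0, then a₁ ≠ 0 and b₄ ≠ 0. -/
theorem stmt_8 {F : Type*} [Field F] [Fintype F]
    (a₁ a₂ a₃ a₄ b₁ b₂ b₃ b₄ : F) (ha₄ : a₄ = 0)
    (hbij : Function.Bijective (fun p : F × F =>
      (a₁ * p.1 ^ 3 + a₂ * p.1 ^ 2 * p.2 + a₃ * p.1 * p.2 ^ 2 + a₄ * p.2 ^ 3,
       b₁ * p.1 ^ 3 + b₂ * p.1 ^ 2 * p.2 + b₃ * p.1 * p.2 ^ 2 + b₄ * p.2 ^ 3))) :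
    a₁ ≠ 0 ∧ b₄ ≠ 0 := by
  subst ha₄
  have hinj := hbij.injective
  constructor
  · intro ha₁
    subst ha₁
    -- y ↦ b₄ y³ is injective, hence surjective
    have hcube : Function.Injective (fun y : F => b₄ * y ^ 3) := by
      intro y y' h
      have h2 : ((0 : F), y) = ((0 : F), y') := by
        apply hinj
        simp only at h ⊢
        simp [h]
      exact (Prod.mk.injEq _ _ _ _ ▸ h2).2
    have hsurj := Finite.surjective_of_injective hcube
    obtain ⟨y, hy⟩ := hsurj b₁
    have h3 : ((1 : F), (0 : F)) = ((0 : F), y) := by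
      apply hinj
      simp only
      simp [hy]
    exact (one_ne_zero : (1:F) ≠ 0) (Prod.mk.injEq _ _ _ _ ▸ h3).1
  · intro hb₄
    subst hb₄
    have h3 : ((0 : F), (0 : F)) = ((0 : F), (1 : F)) := by
      apply hinj
      simp
    exact (one_ne_zero : (1:F) ≠ 0) ((Prod.mk.injEq _ _ _ _ ▸ h3).2).symm
end

section
/- Let q be a prime power with gcd(n, q-1) = 1, and let f₁(x,y) = a₁xⁿ + a₂x^{n-1}y + ⋯ + a_n x y^{n-1} and f₂(x,y) = b₁xⁿ + ⋯ + b_n x y^{n-1} + b_{n+1}yⁿ be coprime homogeneous polynomials of degree n over 𝔽_q. Then (f₁, f₂) induces a bijection of 𝔽_q² if and only if the rational function t ↦ f₁(1,t)/f₂(1,t) induces a bijection of the projective line ℙ¹(𝔽_q) = 𝔽_q ∪ {∞}. -/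
/-!
The pair `Φ = (f₁, f₂)` is homogeneous of degree `n`, and by coprimality it vanishes only at the
origin, so it induces a map of `ℙ¹(𝔽_q)`, which is `t ↦ f₁(1,t)/f₂(1,t)`. Since `gcd(n, q-1) = 1`,
`c ↦ cⁿ` is a bijection of `𝔽_q`. If `Φ(v) = Φ(w)` with `v ≠ 0`, injectivity on `ℙ¹` puts `w = c v`
on the line of `v`, and `cⁿ Φ(v) = Φ(v)` forces `c = 1`. Conversely, if two lines have the same
image, then `Φ(w) = c Φ(v) = Φ(d v)` where `dⁿ = c`, so `w = d v` lies on the line of `v`.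
-/

open MvPolynomial

theorem FiniteField.pow_left_bijective_of_coprime {F : Type*} [Field F] [Fintype F] {n : ℕ}
    (hn : n ≠ 0) (h : n.Coprime (Fintype.card F - 1)) : Function.Bijective (· ^ n : F → F) := by
  refine Finite.injective_iff_bijective.mp fun c d hcd => ?_
  by_cases hd : d = 0
  · subst hd
    exact (pow_eq_zero_iff hn).1 (hcd.trans (zero_pow hn))
  have hq : (c / d) ^ n = 1 := by rw [div_pow, hcd, div_self (pow_ne_zero n hd)]
  have hne : c / d ≠ 0 := ne_zero_pow hn (hq ▸ one_ne_zero)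
  have hord : orderOf (c / d) = 1 := Nat.eq_one_of_dvd_coprimes h (orderOf_dvd_of_pow_eq_one hq)
    (orderOf_dvd_of_pow_eq_one (FiniteField.pow_card_sub_one_eq_one _ hne))
  rwa [orderOf_eq_one_iff, div_eq_one_iff_eq hd] at hord

section Projectivization

variable {K V W α β : Type*} [Field K] [AddCommGroup V] [Module K V] [AddCommGroup W] [Module K W]

variable (K) in
/-- On nonzero vectors, `π` factors through an injection of the projectivization `ℙ K V`. -/
def IsProjectiveCoordinate (π : V → α) : Prop :=
  ∀ v w, v ≠ 0 → w ≠ 0 → (π v = π w ↔ ∃ c : K, c ≠ 0 ∧ w = c • v)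

theorem IsProjectiveCoordinate.comp_linearEquiv {π : W → α} (hπ : IsProjectiveCoordinate K π)
    (e : V ≃ₗ[K] W) : IsProjectiveCoordinate K (π ∘ e) := by
  intro v w hv hw
  simp only [Function.comp_apply, hπ _ _ (e.map_ne_zero_iff.2 hv) (e.map_ne_zero_iff.2 hw),
    ← e.map_smul, e.injective.eq_iff]

theorem injective_iff_injective_projectivization {n : ℕ} (hn : n ≠ 0)
    (hpow : Function.Bijective (· ^ n : K → K)) {Φ : V → W}
    (hΦ : ∀ (c : K) v, Φ (c • v) = c ^ n • Φ v) (hΦ0 : ∀ v, Φ v = 0 → v = 0)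
    {πV : V → α} {πW : W → β}
    (hπV : IsProjectiveCoordinate K πV) (hπW : IsProjectiveCoordinate K πW)
    {σ : α → V} (hσ0 : ∀ s, σ s ≠ 0) (hσ : ∀ s, πV (σ s) = s) :
    Function.Injective Φ ↔ Function.Injective (πW ∘ Φ ∘ σ) := by
  have hΦne : ∀ v, v ≠ 0 → Φ v ≠ 0 := fun v hv h => hv (hΦ0 v h)
  constructor
  · intro hinj s s' h
    obtain ⟨c, hc, he⟩ := (hπW _ _ (hΦne _ (hσ0 s)) (hΦne _ (hσ0 s'))).1 h
    obtain ⟨d, rfl⟩ := hpow.2 c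
    have hd : d ≠ 0 := ne_zero_pow hn hc
    have hs' : σ s' = d • σ s := hinj (he.trans (hΦ d _).symm)
    rw [← hσ s, ← hσ s', hs']
    exact (hπV _ _ (hσ0 s) (smul_ne_zero hd (hσ0 s))).2 ⟨d, hd, rfl⟩
  · have hcoord : ∀ v, v ≠ 0 → πW (Φ (σ (πV v))) = πW (Φ v) := by
      intro v hv
      obtain ⟨c, hc, hvc⟩ := (hπV _ _ (hσ0 _) hv).1 (hσ _)
      exact (hπW _ _ (hΦne _ (hσ0 _)) (hΦne v hv)).2 ⟨c ^ n, pow_ne_zero n hc, by rw [← hΦ, ← hvc]⟩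
    intro hinj v w h
    have hΦ00 : Φ 0 = 0 := by simpa [zero_pow hn] using hΦ 0 0
    by_cases hv : v = 0
    · exact hv.trans (hΦ0 w (h ▸ hv ▸ hΦ00)).symm
    by_cases hw : w = 0
    · exact (hΦ0 v (h.trans (hw ▸ hΦ00))).trans hw.symm
    have hπ : πV v = πV w := hinj (by simp only [Function.comp_apply, hcoord v hv, hcoord w hw, h])
    obtain ⟨c, -, rfl⟩ := (hπV v w hv hw).1 hπ
    have hc : c ^ n = 1 ^ n :=
      smul_left_injective K (hΦne v hv) (by simp only [← hΦ, ← h, one_pow, one_smul])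
    rw [hpow.1 hc, one_smul]

end Projectivization

section ProjectiveLine

variable {F : Type*} [Field F]

/-- A nonzero point over `s` for the coordinate `(x, y) ↦ y / x`, i.e. `toProjLine ∘ Prod.swap`,
in which the rational function `t ↦ f₁(1,t)/f₂(1,t)` is written. -/
def ofProjLine (s : Option F) : F × F :=
  s.elim (0, 1) fun t => (1, t)

theorem ofProjLine_ne_zero (s : Option F) : ofProjLine s ≠ 0 := by
  cases s <;> simp [ofProjLine]

def toProjLine [DecidableEq F] (p : F × F) : Option F :=
  if p.2 = 0 then none else some (p.1 / p.2)

variable [DecidableEq F]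

theorem toProjLine_swap_ofProjLine (s : Option F) : toProjLine (ofProjLine s).swap = s := by
  cases s <;> simp [ofProjLine, toProjLine]

theorem toProjLine_smul {c : F} (hc : c ≠ 0) (p : F × F) : toProjLine (c • p) = toProjLine p := by
  simp [toProjLine, hc, mul_div_mul_left]

theorem isProjectiveCoordinate_toProjLine : IsProjectiveCoordinate F (toProjLine (F := F)) := by
  rintro ⟨u, w⟩ ⟨u', w'⟩ hp hq
  refine ⟨fun h => ?_, fun ⟨c, hc, he⟩ => he ▸ (toProjLine_smul hc _).symm⟩
  by_cases hw : w = 0 <;> by_cases hw' : w' = 0 <;>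
    simp only [toProjLine, hw, hw', ↓reduceIte, reduceCtorEq, Option.some.injEq] at h
  · subst hw hw'
    have hu : u ≠ 0 := by simpa using hp
    exact ⟨u' / u, div_ne_zero (by simpa using hq) hu, by simp [div_mul_cancel₀ _ hu]⟩
  · refine ⟨w' / w, div_ne_zero hw' hw, ?_⟩
    simp only [Prod.smul_mk, smul_eq_mul, Prod.mk.injEq, div_mul_cancel₀ _ hw, and_true]
    field_simp at h ⊢
    linear_combination -h

end ProjectiveLine

section BinaryForm

variable {R : Type*} [CommRing R] {n : ℕ}

noncomputable def binaryForm (n : ℕ) (c : Fin (n + 1) → R) : MvPolynomial (Fin 2) R :=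
  ∑ i : Fin (n + 1), C (c i) * X 0 ^ (n - i : ℕ) * X 1 ^ (i : ℕ)

theorem sum_eq_binaryForm_snoc (a : Fin n → R) :
    ∑ i : Fin n, C (a i) * X 0 ^ (n - (i : ℕ)) * X 1 ^ (i : ℕ) =
      binaryForm n (Fin.snoc a 0 : Fin (n + 1) → R) := by
  simp [binaryForm, Fin.sum_univ_castSucc]

theorem eval_binaryForm (c : Fin (n + 1) → R) (x y : R) :
    eval ![x, y] (binaryForm n c) = ∑ i : Fin (n + 1), c i * x ^ (n - i : ℕ) * y ^ (i : ℕ) := by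
  simp [binaryForm]

theorem eval_mul_binaryForm (c : Fin (n + 1) → R) (k x y : R) :
    eval ![k * x, k * y] (binaryForm n c) = k ^ n * eval ![x, y] (binaryForm n c) := by
  simp only [eval_binaryForm, Finset.mul_sum]
  refine Finset.sum_congr rfl fun i _ => ?_
  rw [mul_pow, mul_pow, ← pow_sub_mul_pow k (Fin.is_le i)]
  ring

theorem eval_zero_one_binaryForm (c : Fin (n + 1) → R) :
    eval ![0, 1] (binaryForm n c) = c (Fin.last n) := by
  rw [eval_binaryForm, Finset.sum_eq_single (Fin.last n)]
  · simp
  · intro i _ hi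
    simp [zero_pow (Nat.sub_ne_zero_of_lt (Fin.val_lt_last hi))]
  · simp

theorem X_zero_dvd_binaryForm {c : Fin (n + 1) → R} (h : c (Fin.last n) = 0) :
    X 0 ∣ binaryForm n c := by
  refine Finset.dvd_sum fun i _ => ?_
  rcases eq_or_ne i (Fin.last n) with rfl | hi
  · simp [h]
  · exact ((dvd_pow_self _ (Nat.sub_ne_zero_of_lt (Fin.val_lt_last hi))).mul_left _).mul_right _

theorem X_one_sub_C_mul_X_zero_dvd_binaryForm {c : Fin (n + 1) → R} {t : R}
    (h : eval ![1, t] (binaryForm n c) = 0) : X 1 - C t * X 0 ∣ binaryForm n c := by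
  have key : binaryForm n c = ∑ i : Fin (n + 1), C (c i) * X 0 ^ (n - i : ℕ) *
      (X 1 ^ (i : ℕ) - (C t * X 0) ^ (i : ℕ)) + C (eval ![1, t] (binaryForm n c)) * X 0 ^ n := by
    simp only [eval_binaryForm, one_pow, mul_one, map_sum, Finset.sum_mul, ← Finset.sum_add_distrib]
    refine Finset.sum_congr rfl fun i _ => ?_
    rw [map_mul, map_pow, ← pow_sub_mul_pow (X 0) (Fin.is_le i)]
    ring
  rw [key, h, map_zero, zero_mul, add_zero]
  exact Finset.dvd_sum fun i _ => (sub_dvd_pow_sub_pow _ _ _).mul_left _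

theorem IsRelPrime.binaryForm_last_ne_zero [Nontrivial R] {c d : Fin (n + 1) → R}
    (h : IsRelPrime (binaryForm n c) (binaryForm n d))
    (hc : c (Fin.last n) = 0) : d (Fin.last n) ≠ 0 := fun hd => by
  simpa using (h (X_zero_dvd_binaryForm hc) (X_zero_dvd_binaryForm hd)).map (eval ![0, 1])

end BinaryForm

section RelPrime

variable {F : Type*} [Field F] {n : ℕ} {c d : Fin (n + 1) → F}

theorem IsRelPrime.eq_zero_of_eval_binaryForm (h : IsRelPrime (binaryForm n c) (binaryForm n d))
    {x y : F} (hc : eval ![x, y] (binaryForm n c) = 0) (hd : eval ![x, y] (binaryForm n d) = 0) :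
    (x, y) = 0 := by
  by_cases hx : x = 0
  · subst hx
    by_contra hy
    replace hy : y ≠ 0 := by simpa using hy
    have hvert (e : Fin (n + 1) → F) : eval ![0, y] (binaryForm n e) = y ^ n * e (Fin.last n) := by
      simpa [eval_zero_one_binaryForm] using eval_mul_binaryForm e y 0 1
    rw [hvert, mul_eq_zero, or_iff_right (pow_ne_zero n hy)] at hc hd
    exact h.binaryForm_last_ne_zero hc hd
  · set t := y / x
    have hdehom (e : Fin (n + 1) → F) :
        eval ![x, y] (binaryForm n e) = x ^ n * eval ![1, t] (binaryForm n e) := by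
      simpa [t, mul_div_cancel₀ _ hx] using eval_mul_binaryForm e x 1 t
    rw [hdehom, mul_eq_zero, or_iff_right (pow_ne_zero n hx)] at hc hd
    have hu := (h (X_one_sub_C_mul_X_zero_dvd_binaryForm hc)
      (X_one_sub_C_mul_X_zero_dvd_binaryForm hd)).map (eval ![1, t])
    simp at hu

end RelPrime

/-- Corollary 3.7: for gcd(n, q-1) = 1 and coprime homogeneous degree-n forms
f₁ = a₁xⁿ + ⋯ + a_n x y^{n-1} (no yⁿ term) and f₂ = b₁xⁿ + ⋯ + b_{n+1}yⁿ over 𝔽_q,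
the system (f₁, f₂) is a bijection of 𝔽_q² iff the rational function
t ↦ f₁(1,t)/f₂(1,t) is a bijection of ℙ¹(𝔽_q) = 𝔽_q ∪ {∞}.  Here ℙ¹(𝔽_q) is modeled
as `Option F` with `none` = ∞, and the induced map sends a finite t with
f₂(1,t) = 0 to ∞, and ∞ to 0 (the value of the rational function at ∞, since x
divides f₁ and b_{n+1} ≠ 0 by coprimality; the degenerate branch b_{n+1} = 0 is
sent to ∞ but cannot occur under the coprimality hypothesis). -/
theorem stmt_9 {F : Type*} [Field F] [Fintype F] [DecidableEq F]
    (n : ℕ) (hn : 0 < n) (hgcd : Nat.gcd n (Fintype.card F - 1) = 1)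
    (a : Fin n → F) (b : Fin (n + 1) → F) (f₁ f₂ : MvPolynomial (Fin 2) F)
    (hf₁ : f₁ = ∑ i : Fin n, C (a i) * X 0 ^ (n - (i : ℕ)) * X 1 ^ (i : ℕ))
    (hf₂ : f₂ = ∑ i : Fin (n + 1), C (b i) * X 0 ^ (n - (i : ℕ)) * X 1 ^ (i : ℕ))
    (hcop : ∀ d : MvPolynomial (Fin 2) F, d ∣ f₁ → d ∣ f₂ → IsUnit d) :
    Function.Bijective (fun p : F × F =>
      (eval ![p.1, p.2] f₁, eval ![p.1, p.2] f₂)) ↔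
    Function.Bijective (fun t : Option F =>
      match t with
      | none => if b (Fin.last n) = 0 then none else some (0 : F)
      | some t =>
          if eval ![1, t] f₂ = 0 then none
          else some (eval ![1, t] f₁ / eval ![1, t] f₂)) := by
  rw [sum_eq_binaryForm_snoc] at hf₁
  change f₂ = binaryForm n b at hf₂
  subst hf₁ hf₂
  have hrel : IsRelPrime (binaryForm n (Fin.snoc a 0)) (binaryForm n b) := fun d => hcop d
  have hb : b (Fin.last n) ≠ 0 := hrel.binaryForm_last_ne_zero (Fin.snoc_last _ _)
  rw [← Finite.injective_iff_bijective, ← Finite.injective_iff_bijective]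
  convert injective_iff_injective_projectivization hn.ne'
    (FiniteField.pow_left_bijective_of_coprime hn.ne' hgcd) ?_ ?_
    (isProjectiveCoordinate_toProjLine.comp_linearEquiv (LinearEquiv.prodComm F F F))
    isProjectiveCoordinate_toProjLine ofProjLine_ne_zero toProjLine_swap_ofProjLine using 2
  · funext s
    cases s
    · simp [hb, ofProjLine, toProjLine, eval_zero_one_binaryForm]
    · rfl
  · rintro c ⟨x, y⟩
    simp [eval_mul_binaryForm]
  · rintro ⟨x, y⟩ h
    exact hrel.eq_zero_of_eval_binaryForm (congrArg Prod.fst h) (congrArg Prod.snd h)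
end

section
/- Let q ≡ 2 (mod 3) be a prime power and let Q(x,y) = a₁x² + a₂xy + a₃y² be a binary quadratic form over 𝔽_q whose only zero in 𝔽_q² is (0,0), with a₁ ≠ 0, a₃ ≠ 0. Then the map F(x,y) = (x·Q(x,y), k⁻¹·y·Q(x,y)) is a bijection of 𝔽_q² for any k ∈ 𝔽_q*. -/
lemma cube_eq_one_imp {F : Type*} [Field F] [Fintype F]
    (hq : Fintype.card F % 3 = 2) {t : F} (ht : t ^ 3 = 1) : t = 1 := by
  classical
  have ht0 : t ≠ 0 := by rintro rfl; simp at ht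
  set u : Fˣ := Units.mk0 t ht0 with hu
  have h3 : orderOf u ∣ 3 := by
    apply orderOf_dvd_of_pow_eq_one
    ext; push_cast [hu]; exact ht
  have hc : orderOf u ∣ Fintype.card Fˣ := orderOf_dvd_card
  rw [Fintype.card_units] at hc
  have hcop : Nat.Coprime 3 (Fintype.card F - 1) := by
    have h1 : 0 < Fintype.card F := Fintype.card_pos
    rw [Nat.Prime.coprime_iff_not_dvd Nat.prime_three]
    omega
  have hd : orderOf u ∣ 1 := hcop ▸ Nat.dvd_gcd h3 hc
  have hu1 : u = 1 := orderOf_eq_one_iff.mp (Nat.dvd_one.mp hd)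
  have := congrArg (Units.val) hu1
  simpa [hu] using this

/-- For q ≡ 2 (mod 3), if Q(x,y) = a₁x² + a₂xy + a₃y² has (0,0) as its only zero in
𝔽_q², with a₁ ≠ 0, a₃ ≠ 0, then F(x,y) = (x·Q(x,y), k⁻¹·y·Q(x,y)) is a bijection of
𝔽_q² for any k ≠ 0. -/
theorem stmt_12 {F : Type*} [Field F] [Fintype F]
    (hq : Fintype.card F % 3 = 2)
    (a₁ a₂ a₃ : F) (ha₁ : a₁ ≠ 0) (ha₃ : a₃ ≠ 0)
    (hQ : ∀ x y : F, a₁ * x ^ 2 + a₂ * x * y + a₃ * y ^ 2 = 0 → x = 0 ∧ y = 0)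
    (k : F) (hk : k ≠ 0) :
    Function.Bijective (fun p : F × F =>
      (p.1 * (a₁ * p.1 ^ 2 + a₂ * p.1 * p.2 + a₃ * p.2 ^ 2),
       k⁻¹ * (p.2 * (a₁ * p.1 ^ 2 + a₂ * p.1 * p.2 + a₃ * p.2 ^ 2)))) := by
  apply Finite.injective_iff_bijective.mp
  rintro ⟨x, y⟩ ⟨u, v⟩ h
  simp only [Prod.mk.injEq] at h
  obtain ⟨h1, h2⟩ := h
  have h2 : y * (a₁ * x ^ 2 + a₂ * x * y + a₃ * y ^ 2)
      = v * (a₁ * u ^ 2 + a₂ * u * v + a₃ * v ^ 2) :=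
    mul_left_cancel₀ (inv_ne_zero hk) h2
  set Q := a₁ * x ^ 2 + a₂ * x * y + a₃ * y ^ 2 with hQdef
  set Q' := a₁ * u ^ 2 + a₂ * u * v + a₃ * v ^ 2 with hQ'def
  by_cases hz : Q = 0
  · obtain ⟨rfl, rfl⟩ := hQ x y hz
    rw [hz] at h1 h2
    simp only [mul_zero] at h1 h2
    by_cases hz' : Q' = 0
    · obtain ⟨rfl, rfl⟩ := hQ u v hz'
      rfl
    · obtain rfl : u = 0 := by rcases mul_eq_zero.mp h1.symm with h | h; exact h; exact absurd h hz'
      obtain rfl : v = 0 := by rcases mul_eq_zero.mp h2.symm with h | h; exact h; exact absurd h hz'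
      rfl
  · have hz' : Q' ≠ 0 := by
      intro hz'
      obtain ⟨rfl, rfl⟩ := hQ u v hz'
      rw [hz'] at h1 h2
      simp only [mul_zero] at h1 h2
      obtain rfl : x = 0 := by rcases mul_eq_zero.mp h1 with h | h; exact h; exact absurd h hz
      obtain rfl : y = 0 := by rcases mul_eq_zero.mp h2 with h | h; exact h; exact absurd h hz
      exact hz (by simp [hQdef])
    set t : F := Q / Q' with htdef
    have ht0 : t ≠ 0 := div_ne_zero hz hz'
    have hu : u = x * t := by
      rw [htdef, ← mul_div_assoc, eq_div_iff hz']; exact h1.symm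
    have hv : v = y * t := by
      rw [htdef, ← mul_div_assoc, eq_div_iff hz']; exact h2.symm
    have hQ'eq : Q' = t ^ 2 * Q := by rw [hQ'def, hu, hv]; ring
    have hQeq : Q = t * Q' := (div_mul_cancel₀ Q hz').symm
    rw [hQ'eq] at hQeq
    have hfac : (t ^ 3 - 1) * Q = 0 := by linear_combination -hQeq
    have ht3 : t ^ 3 = 1 := by
      rcases mul_eq_zero.mp hfac with h | h
      · exact sub_eq_zero.mp h
      · exact absurd h hz
    have ht1 : t = 1 := cube_eq_one_imp hq ht3
    rw [ht1, mul_one] at hu hv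
    rw [hu, hv]
end

section
/- Let q be a prime power with q ≡ 2 (mod 3) and q odd. Then f(x) = x³ + 3x^{2q+1} is a bijection of 𝔽_{q²}. -/
/-- For an odd prime power q with q ≡ 2 (mod 3), the binomial f(x) = x³ + 3x^{2q+1}
permutes 𝔽_{q²}. -/
theorem stmt_15 {K : Type*} [Field K] [Fintype K] (q : ℕ)
    (hq : ∃ p k : ℕ, p.Prime ∧ 0 < k ∧ q = p ^ k)
    (hodd : Odd q) (hq3 : q % 3 = 2)
    (hcard : Fintype.card K = q ^ 2) :
    Function.Bijective (fun x : K => x ^ 3 + 3 * x ^ (2 * q + 1)) := by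
  obtain ⟨p, k, hp, hk, hqpk⟩ := hq
  -- characteristic of K is p
  have hrc : CharP K (ringChar K) := ringChar.charP K
  have hrcp : (ringChar K).Prime := CharP.char_is_prime K (ringChar K)
  obtain ⟨n, -, hcK⟩ := FiniteField.card K (ringChar K)
  have hring : ringChar K = p := by
    have hdvd : ringChar K ∣ p ^ (k * 2) := by
      rw [pow_mul, ← hqpk, ← hcard, hcK]
      exact dvd_pow_self _ (by positivity)
    exact (Nat.prime_dvd_prime_iff_eq hrcp hp).mp (hrcp.dvd_of_dvd_pow hdvd)
  haveI : CharP K p := hring ▸ hrc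
  haveI : Fact p.Prime := ⟨hp⟩
  -- basic facts
  have hq1 : 1 ≤ q := by omega
  have hpow2 : ∀ x : K, x ^ (q * q) = x := by
    intro x
    have := FiniteField.pow_card x
    rwa [hcard, sq] at this
  have hfrob : ∀ x y : K, (x + y) ^ q = x ^ q + y ^ q := by
    intro x y
    rw [hqpk]; exact add_pow_char_pow ..
  have h3q : (3 : K) ^ q = 3 := by
    have : ((3 : ℕ) : K) ^ q = ((3 : ℕ) : K) := by
      rw [hqpk, ← iterateFrobenius_def, map_natCast]
    simpa using this
  have hsubq : ∀ x y : K, (x - y) ^ q = x ^ q - y ^ q := by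
    intro x y
    rw [sub_eq_add_neg, hfrob, hodd.neg_pow, sub_eq_add_neg]
  have htwo : (2 : K) ≠ 0 := by
    have hp2 : p ≠ 2 := by
      rintro rfl
      rw [hqpk] at hodd
      exact (Nat.not_odd_iff_even.mpr (Nat.even_pow.mpr ⟨even_two, hk.ne'⟩)) hodd
    have h2 : ((2 : ℕ) : K) ≠ 0 := fun h =>
      hp2 ((Nat.prime_dvd_prime_iff_eq hp Nat.prime_two).mp
        ((CharP.cast_eq_zero_iff K p 2).mp h))
    simpa using h2
  -- cube map is injective on the fixed field of x ↦ x^q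
  obtain ⟨m, hm⟩ : ∃ m, 3 * m = 2 * q - 1 := ⟨(2 * q - 1) / 3, by omega⟩
  have cubeA : ∀ a b : K, a ^ q = a → b ^ q = b → a ^ 3 = b ^ 3 → a = b := by
    intro a b ha hb h3
    have key : ∀ c : K, c ^ q = c → c ≠ 0 → (c ^ 3) ^ m = c := by
      intro c hc hc0
      have h1 : c * (c ^ 3) ^ m = c * c := by
        rw [← pow_mul, hm, ← pow_succ']
        have h2q : 2 * q - 1 + 1 = 2 * q := by omega
        rw [h2q, two_mul, pow_add, hc]
      exact mul_left_cancel₀ hc0 h1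
    by_cases ha0 : a = 0
    · subst ha0
      have hb3 : b ^ 3 = 0 := by rw [← h3]; simp
      have := pow_eq_zero_iff (n := 3) (by norm_num) |>.mp hb3
      simp [this]
    · by_cases hb0 : b = 0
      · exfalso; apply ha0
        have ha3 : a ^ 3 = 0 := by rw [h3, hb0]; simp
        exact pow_eq_zero_iff (n := 3) (by norm_num) |>.mp ha3
      · rw [← key a ha ha0, ← key b hb hb0, h3]
  -- cube map is injective on the set of "anti-fixed" points
  have cubeB : ∀ a b : K, a ^ q = -a → b ^ q = -b → a ^ 3 = b ^ 3 → a = b := by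
    intro a b ha hb h3
    have hsq : a ^ 2 = b ^ 2 := by
      apply cubeA
      · rw [← pow_mul, mul_comm 2 q, pow_mul, ha]; ring
      · rw [← pow_mul, mul_comm 2 q, pow_mul, hb]; ring
      · calc (a ^ 2) ^ 3 = (a ^ 3) ^ 2 := by ring
          _ = (b ^ 3) ^ 2 := by rw [h3]
          _ = (b ^ 2) ^ 3 := by ring
    have hfac : (a - b) * (a + b) = 0 := by linear_combination hsq
    rcases mul_eq_zero.mp hfac with h | h
    · exact sub_eq_zero.mp h
    · have hab : a = -b := eq_neg_of_add_eq_zero_left h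
      have h2b : (2 : K) * b ^ 3 = 0 := by
        linear_combination (a ^ 2 - a * b + b ^ 2) * hab - h3
      have hb0 : b = 0 := by
        rcases mul_eq_zero.mp h2b with h' | h'
        · exact absurd h' htwo
        · exact pow_eq_zero_iff (n := 3) (by norm_num) |>.mp h'
      rw [hab, hb0]; simp
  -- the value of f(x)^q
  have hfq : ∀ x : K, (x ^ 3 + 3 * x ^ (2 * q + 1)) ^ q = (x ^ q) ^ 3 + 3 * (x ^ 2 * x ^ q) := by
    intro x
    rw [hfrob, mul_pow, h3q]
    congr 1
    · rw [← pow_mul, mul_comm, pow_mul]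
    · congr 1
      rw [← pow_mul]
      have he : (2 * q + 1) * q = q * q * 2 + q := by ring
      rw [he, pow_add, pow_mul, hpow2]
  have e : ∀ x : K, x ^ (2 * q + 1) = (x ^ q) ^ 2 * x := by
    intro x
    rw [pow_add, mul_comm 2 q, pow_mul, pow_one]
  have keyadd : ∀ x : K, (x + x ^ q) ^ 3
      = (x ^ 3 + 3 * x ^ (2 * q + 1)) + (x ^ 3 + 3 * x ^ (2 * q + 1)) ^ q := by
    intro x; rw [hfq, e x]; ring
  have keysub : ∀ x : K, (x - x ^ q) ^ 3
      = (x ^ 3 + 3 * x ^ (2 * q + 1)) - (x ^ 3 + 3 * x ^ (2 * q + 1)) ^ q := by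
    intro x; rw [hfq, e x]; ring
  have hxq : ∀ x : K, (x + x ^ q) ^ q = x + x ^ q := by
    intro x; rw [hfrob, ← pow_mul, hpow2, add_comm]
  have hxqm : ∀ x : K, (x - x ^ q) ^ q = -(x - x ^ q) := by
    intro x; rw [hsubq, ← pow_mul, hpow2]; ring
  -- conclude injectivity, hence bijectivity
  rw [Fintype.bijective_iff_injective_and_card]
  refine ⟨?_, rfl⟩
  intro x y hxy
  simp only at hxy
  have h1 : x + x ^ q = y + y ^ q :=
    cubeA _ _ (hxq x) (hxq y) (by rw [keyadd x, keyadd y, hxy])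
  have h2 : x - x ^ q = y - y ^ q :=
    cubeB _ _ (hxqm x) (hxqm y) (by rw [keysub x, keysub y, hxy])
  have h2x : (2 : K) * x = 2 * y := by linear_combination h1 + h2
  exact mul_left_cancel₀ htwo h2x
end

section
/- Let q be an odd prime power with q ≡ -1 (mod 12). Then f(x) = x³ - 3x^{2q+1} is a bijection of 𝔽_{q²}. -/
/-!
Since `q ≡ 3 (mod 4)`, `𝔽_{q²}` contains `i` with `i² = -1` and `i ^ q = -i`, and `x ↦ x ^ q` is
the conjugation `σ` of `𝔽_{q²} / 𝔽_q`. Writing `x = a + b i` with `a, b ∈ 𝔽_q`, and putting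
`u = a + b`, `v = a - b`, one finds `x³ - 3 x σ(x)² = (i - 1) u³ - (i + 1) v³`. Since `1, i` is a
basis of `𝔽_{q²} / 𝔽_q`, this value determines `u³` and `v³`; as `3 ∤ q - 1`, cubing is injective
on `𝔽_q`, so it determines `u`, `v` and hence `x`.
-/

open Function

lemma injOn_pow_setOf_pow_eq_self {M : Type*} [CommGroupWithZero M] {n q : ℕ} (hn : n ≠ 0)
    (h : n.Coprime (q - 1)) : Set.InjOn (· ^ n : M → M) {x | x ^ q = x} := by
  have pow_sub_one {a : M} (ha : a ^ q = a) (ha0 : a ≠ 0) : a ^ (q - 1) = 1 := by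
    rcases Nat.eq_zero_or_pos q with rfl | hq
    · exact pow_zero a
    · rw [pow_sub₀ a ha0 hq, pow_one, ha, mul_inv_cancel₀ ha0]
  intro a ha b hb hab
  simp only [Set.mem_ofPred_eq] at ha hb hab
  by_cases hb0 : b = 0
  · subst hb0
    rwa [zero_pow hn, pow_eq_zero_iff hn] at hab
  have ha0 : a ≠ 0 := by
    rintro rfl
    exact hb0 (pow_eq_zero_iff hn |>.mp (by rw [← hab, zero_pow hn]))
  rw [← div_eq_one_iff_eq hb0]
  refine (pow_eq_one_iff_of_coprime h).mp ⟨?_, ?_⟩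
  · rw [div_pow, hab, div_self (pow_ne_zero n hb0)]
  · rw [div_pow, pow_sub_one ha ha0, pow_sub_one hb hb0, div_one]

lemma pow_eq_neg_of_sq_eq_neg_one {R : Type*} [Ring R] {i : R} (hi : i ^ 2 = -1) {n : ℕ}
    (hn : n % 4 = 3) : i ^ n = -i := by
  have hi4 : i ^ 4 = 1 := by rw [show 4 = 2 * 2 from rfl, pow_mul, hi, neg_one_sq]
  rw [← Nat.div_add_mod n 4, hn, pow_add, pow_mul, hi4, one_pow, one_mul, pow_succ, hi,
    neg_one_mul]

lemma involutive_iterateFrobenius_of_card_eq_sq {K : Type*} [Field K] [Fintype K] {p k : ℕ}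
    [ExpChar K p] (hcard : Fintype.card K = (p ^ k) ^ 2) : Involutive (iterateFrobenius K p k) :=
  fun x => by rw [iterateFrobenius_def, iterateFrobenius_def, ← pow_mul, ← sq, ← hcard,
    FiniteField.pow_card]

namespace InvolutiveConj

variable {K : Type*} [Field K] (σ : K →+* K) (i : K)

/-- For `x = a + b i` with `a`, `b` fixed by `σ`, `sumCoord σ i x = 2 (a + b)` and
`diffCoord σ i x = 2 (a - b)`. -/
def sumCoord (x : K) : K := (1 - i) * x + (1 + i) * σ x

def diffCoord (x : K) : K := (1 + i) * x + (1 - i) * σ x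

variable {σ i}

lemma map_sumCoord (hσ : Involutive σ) (hσi : σ i = -i) (x : K) :
    σ (sumCoord σ i x) = sumCoord σ i x := by
  simp only [sumCoord, map_add, map_mul, map_sub, map_one, hσ x, hσi]
  ring

lemma map_diffCoord (hσ : Involutive σ) (hσi : σ i = -i) (x : K) :
    σ (diffCoord σ i x) = diffCoord σ i x := by
  simp only [diffCoord, map_add, map_mul, map_sub, map_one, hσ x, hσi]
  ring

lemma sumCoord_add_diffCoord (hi : i ^ 2 = -1) (x : K) :
    (1 + i) * sumCoord σ i x + (1 - i) * diffCoord σ i x = 4 * x := by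
  simp only [sumCoord, diffCoord]
  linear_combination (2 * σ x - 2 * x) * hi

lemma eight_mul_cube_sub_three_mul_mul_sq (hi : i ^ 2 = -1) (x : K) :
    8 * (x ^ 3 - 3 * x * σ x ^ 2) =
      (i - 1) * sumCoord σ i x ^ 3 - (i + 1) * diffCoord σ i x ^ 3 := by
  simp only [sumCoord, diffCoord]
  linear_combination (2 * i ^ 2 * x ^ 3 - 6 * i ^ 2 * x ^ 2 * σ x + 6 * i ^ 2 * x * σ x ^ 2
    - 2 * i ^ 2 * σ x ^ 3 + 10 * x ^ 3 + 6 * x ^ 2 * σ x - 18 * x * σ x ^ 2 + 2 * σ x ^ 3) * hi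

lemma eq_zero_of_sub_one_mul_eq_add_one_mul (hi : i ^ 2 = -1) (hσi : σ i = -i)
    (h2 : (2 : K) ≠ 0) {u v : K} (hu : σ u = u) (hv : σ v = v)
    (h : (i - 1) * u = (i + 1) * v) : u = 0 ∧ v = 0 := by
  have hσ : (-i - 1) * u = (-i + 1) * v := by
    simpa only [map_mul, map_sub, map_add, map_one, hσi, hu, hv] using congrArg σ h
  have hi0 : i ≠ 0 := by
    rintro rfl
    norm_num at hi
  have hu0 : u = 0 := by
    have : (2 * 2 * i) * u = 0 := by linear_combination (1 - i) * h + (-i - 1) * hσ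
    simpa [h2, hi0] using this
  refine ⟨hu0, ?_⟩
  have hi1 : i + 1 ≠ 0 := by
    intro h0
    exact h2 (by linear_combination hi - (i - 1) * h0)
  simpa [hu0, hi1] using h.symm

theorem injective_cube_sub_three_mul_mul_sq (hσ : Involutive σ) (hi : i ^ 2 = -1)
    (hσi : σ i = -i) (h2 : (2 : K) ≠ 0) (hcube : Set.InjOn (· ^ 3 : K → K) {x | σ x = x}) :
    Injective fun x : K => x ^ 3 - 3 * x * σ x ^ 2 := by
  intro x y hxy
  have cube_sub_fixed {u v : K} (hu : σ u = u) (hv : σ v = v) :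
      σ (u ^ 3 - v ^ 3) = u ^ 3 - v ^ 3 := by
    rw [map_sub, map_pow, map_pow, hu, hv]
  obtain ⟨hs, hd⟩ := eq_zero_of_sub_one_mul_eq_add_one_mul hi hσi h2
    (cube_sub_fixed (map_sumCoord hσ hσi x) (map_sumCoord hσ hσi y))
    (cube_sub_fixed (map_diffCoord hσ hσi x) (map_diffCoord hσ hσi y))
    (by linear_combination eight_mul_cube_sub_three_mul_mul_sq hi y -
      eight_mul_cube_sub_three_mul_mul_sq hi x + 8 * hxy)
  have hs' := hcube (map_sumCoord hσ hσi x) (map_sumCoord hσ hσi y) (sub_eq_zero.mp hs)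
  have hd' := hcube (map_diffCoord hσ hσi x) (map_diffCoord hσ hσi y) (sub_eq_zero.mp hd)
  have h4 : (4 : K) ≠ 0 := by
    rw [show (4 : K) = 2 * 2 by norm_num]
    exact mul_ne_zero h2 h2
  apply mul_left_cancel₀ h4
  rw [← sumCoord_add_diffCoord hi x, ← sumCoord_add_diffCoord hi y, hs', hd']

end InvolutiveConj

open InvolutiveConj in
theorem stmt_17_general {K : Type*} [Field K] [Fintype K] (q : ℕ)
    (hq : ∃ p k : ℕ, p.Prime ∧ 0 < k ∧ q = p ^ k)
    (hq12 : q % 12 = 11)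
    (hcard : Fintype.card K = q ^ 2) :
    Function.Bijective (fun x : K => x ^ 3 - 3 * x ^ (2 * q + 1)) := by
  obtain ⟨p, k, hp, -, hqpk⟩ := hq
  have : Fact p.Prime := ⟨hp⟩
  have : CharP K p := charP_of_card_eq_prime_pow (f := k * 2) (by rw [hcard, hqpk, pow_mul])
  have hσq (x : K) : iterateFrobenius K p k x = x ^ q := by rw [iterateFrobenius_def, hqpk]
  have hq4 : q % 4 = 3 := by omega
  obtain ⟨i, hi⟩ := FiniteField.isSquare_neg_one_iff.mpr <| by
    rw [hcard, Nat.pow_mod, hq4]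
    decide
  replace hi : i ^ 2 = -1 := by rw [hi, sq]
  have h2 : (2 : K) ≠ 0 := Ring.two_ne_zero <| mt FiniteField.even_card_iff_char_two.mp <| by
    rw [hcard, Nat.pow_mod, show q % 2 = 1 by omega]
    decide
  have hcube := injOn_pow_setOf_pow_eq_self (M := K) (q := q) three_ne_zero
    ((Nat.Prime.coprime_iff_not_dvd Nat.prime_three).mpr (by omega))
  have hf : (fun x : K => x ^ 3 - 3 * x ^ (2 * q + 1)) =
      fun x => x ^ 3 - 3 * x * iterateFrobenius K p k x ^ 2 := by
    funext x
    rw [hσq]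
    ring
  rw [hf, ← Finite.injective_iff_bijective]
  refine injective_cube_sub_three_mul_mul_sq
    (involutive_iterateFrobenius_of_card_eq_sq (hqpk ▸ hcard)) hi ?_ h2 ?_
  · rw [hσq, pow_eq_neg_of_sq_eq_neg_one hi hq4]
  · simpa only [hσq] using hcube

/-- For an odd prime power q with q ≡ -1 (mod 12), f(x) = x³ - 3x^{2q+1}
permutes 𝔽_{q²}. -/
theorem stmt_17 {K : Type*} [Field K] [Fintype K] (q : ℕ)
    (hq : ∃ p k : ℕ, p.Prime ∧ 0 < k ∧ q = p ^ k)
    (hodd : Odd q) (hq12 : q % 12 = 11)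
    (hcard : Fintype.card K = q ^ 2) :
    Function.Bijective (fun x : K => x ^ 3 - 3 * x ^ (2 * q + 1)) :=
  stmt_17_general q hq hq12 hcard
end

section
/- Let L(x) be a nonzero linearized (2-linear) polynomial over 𝔽_{2^m}. Then x³ + L(x) is a bijection of 𝔽_{2^m} if and only if m is odd and L(x) = θ²x + θx² for some θ ∈ 𝔽_{2^m}*. -/
/-!
Write `f x = x ^ 3 + L x`. In characteristic 2, `f (x + u) = f x + u x² + u² x + f u`, so if `f`
is injective then for every `u ≠ 0` the Artin–Schreier equation `s² + s = f u / u³` has no root,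
that is `Tr (f u / u³) = 1` for the absolute trace `Tr`. Hence `u ↦ Tr (L u / u³)` is constant on
`𝔽ˣ`. Expanding the trace, it is the polynomial `∑ a_i^(2^j) u^(2^j (2^i - 3))` with exponents
reduced modulo `2^m - 1`; it has degree `< 2^m - 1` and no constant term, so it vanishes, and the
constant `1 + Tr 1 = 1 + m` vanishes too: `m` is odd. In binary, multiplication by `2^j` modulo
`2^m - 1` rotates digits, and for odd `m` the rotations of the digit patterns of the `2^i - 3` are
pairwise distinct, except that `2^0 - 3 = 2 (2^1 - 3)`. Comparing coefficients gives `a_i = 0` for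
`i ≥ 2` and `a_0 = a_1²`.

Conversely `x³ + θ² x + θ x² = (x + θ)³ + θ³`, and cubing is bijective as `3 ∤ 2^m - 1` for odd `m`.
-/

open Finset Polynomial
open scoped Pointwise

section BitPattern

variable {m : ℕ}

def bitVal (S : Finset (Fin m)) : ℕ := ∑ t ∈ S, 2 ^ (t : ℕ)

lemma bitVal_injective : Function.Injective (bitVal (m := m)) := by
  intro S T h
  apply map_injective Fin.valEmbedding
  apply geomSum_injective le_rfl
  simpa [bitVal] using h

lemma bitVal_univ : bitVal (univ : Finset (Fin m)) = 2 ^ m - 1 := by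
  rw [bitVal, Fin.sum_univ_eq_sum_range (2 ^ ·), Nat.geomSum_eq le_rfl]
  simp

lemma bitVal_pos {S : Finset (Fin m)} (hS : S.Nonempty) : 0 < bitVal S :=
  sum_pos (fun _ _ => Nat.two_pow_pos _) hS

lemma bitVal_lt {S : Finset (Fin m)} (hS : S ≠ univ) : bitVal S < 2 ^ m - 1 := by
  obtain ⟨t, -, ht⟩ := exists_of_ssubset (ssubset_univ_iff.mpr hS)
  rw [← bitVal_univ]
  exact sum_lt_sum_of_subset (subset_univ S) (mem_univ t) ht (Nat.two_pow_pos _)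
    fun _ _ _ => Nat.zero_le _

lemma two_pow_modEq_one (m : ℕ) : 2 ^ m ≡ 1 [MOD 2 ^ m - 1] :=
  Nat.modEq_sub Nat.one_le_two_pow

lemma two_pow_mod_modEq (a : ℕ) : 2 ^ (a % m) ≡ 2 ^ a [MOD 2 ^ m - 1] := by
  have h := ((two_pow_modEq_one m).pow (a / m)).mul_right (2 ^ (a % m))
  rw [one_pow, one_mul, ← pow_mul, ← pow_add, Nat.div_add_mod] at h
  exact h.symm

-- The binary digits, for `i < m`, of `2 ^ i - 3` modulo `2 ^ m - 1`, namely of `2 ^ m - 3`,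
-- `2 ^ m - 2` and `1 + 2 ^ 2 + ⋯ + 2 ^ (i - 1)`.
def pattern (m : ℕ) : ℕ → Finset (Fin m)
  | 0 => {t | (t : ℕ) < m ∧ (t : ℕ) ≠ 1}
  | 1 => {t | (t : ℕ) < m ∧ (t : ℕ) ≠ 0}
  | i + 2 => {t | (t : ℕ) < i + 2 ∧ (t : ℕ) ≠ 1}

lemma map_valEmbedding_filter_lt_ne {n k : ℕ} (hn : n ≤ m) :
    ({t : Fin m | (t : ℕ) < n ∧ (t : ℕ) ≠ k} : Finset (Fin m)).map Fin.valEmbedding =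
      (range n).erase k := by
  ext x
  simp only [mem_map, mem_filter, mem_univ, true_and, Fin.valEmbedding_apply, mem_erase,
    mem_range]
  exact ⟨by rintro ⟨t, ⟨ht, htk⟩, rfl⟩; exact ⟨htk, ht⟩,
    fun ⟨hxk, hx⟩ => ⟨⟨x, by omega⟩, ⟨hx, hxk⟩, rfl⟩⟩

lemma bitVal_filter_lt_ne_add_two_pow {n k : ℕ} (hn : n ≤ m) (hk : k < n) :
    bitVal ({t : Fin m | (t : ℕ) < n ∧ (t : ℕ) ≠ k} : Finset (Fin m)) + 2 ^ k = 2 ^ n - 1 := by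
  have h := sum_erase_add (range n) (2 ^ ·) (mem_range.mpr hk)
  rw [Nat.geomSum_eq le_rfl, ← map_valEmbedding_filter_lt_ne hn, sum_map] at h
  simpa [bitVal] using h

lemma card_filter_lt_ne {n k : ℕ} (hn : n ≤ m) (hk : k < n) :
    ({t : Fin m | (t : ℕ) < n ∧ (t : ℕ) ≠ k} : Finset (Fin m)).card = n - 1 := by
  rw [← card_map Fin.valEmbedding, map_valEmbedding_filter_lt_ne hn,
    card_erase_of_mem (mem_range.mpr hk), card_range]

lemma card_pattern (hm : 2 ≤ m) {i : ℕ} (hi : i < m) :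
    (pattern m i).card = if i ≤ 1 then m - 1 else i - 1 := by
  match i with
  | 0 => exact card_filter_lt_ne le_rfl (by omega)
  | 1 => exact card_filter_lt_ne le_rfl (by omega)
  | i + 2 => rw [if_neg (by omega)]; exact card_filter_lt_ne hi.le (by omega)

lemma pattern_nonempty (hm : 2 ≤ m) {i : ℕ} (hi : i < m) : (pattern m i).Nonempty := by
  rw [← card_pos, card_pattern hm hi]
  split_ifs <;> omega

lemma pattern_ne_univ (hm : 2 ≤ m) {i : ℕ} (hi : i < m) : pattern m i ≠ univ := fun h => by
  have := card_pattern hm hi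
  rw [h, card_univ, Fintype.card_fin] at this
  split_ifs at this <;> omega

lemma bitVal_pattern_add_three_modEq (hm : 2 ≤ m) {i : ℕ} (hi : i < m) :
    bitVal (pattern m i) + 3 ≡ 2 ^ i [MOD 2 ^ m - 1] := by
  have hpos := Nat.one_le_two_pow (n := m)
  match i with
  | 0 =>
    have h := bitVal_filter_lt_ne_add_two_pow (m := m) le_rfl (k := 1) (by omega)
    rw [show bitVal (pattern m 0) + 3 = 2 ^ m by simp only [pattern] at h ⊢; omega]
    exact two_pow_modEq_one m
  | 1 =>
    have h := bitVal_filter_lt_ne_add_two_pow (m := m) le_rfl (k := 0) (by omega)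
    rw [show bitVal (pattern m 1) + 3 = 2 ^ m + 1 by simp only [pattern] at h ⊢; omega]
    exact (two_pow_modEq_one m).add_right 1
  | i + 2 =>
    have h := bitVal_filter_lt_ne_add_two_pow (m := m) hi.le (k := 1) (by omega)
    rw [show bitVal (pattern m (i + 2)) + 3 = 2 ^ (i + 2) by simp only [pattern] at h ⊢; omega]

variable [NeZero m]

lemma bitVal_vadd_modEq (j : Fin m) (S : Finset (Fin m)) :
    bitVal (j +ᵥ S) ≡ 2 ^ (j : ℕ) * bitVal S [MOD 2 ^ m - 1] := by
  rw [bitVal, vadd_finset_def, sum_image fun x _ y _ h => vadd_left_cancel j h, bitVal, mul_sum]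
  refine Nat.ModEq.sum fun t _ => ?_
  rw [vadd_eq_add, Fin.val_add, ← pow_add]
  exact two_pow_mod_modEq _

lemma eq_zero_of_vadd_pattern_eq_self (hodd : Odd m) {i : ℕ} (hi : 2 ≤ i) (him : i < m)
    {j : Fin m} (h : j +ᵥ pattern m i = pattern m i) : j = 0 := by
  obtain ⟨n, rfl⟩ := Nat.exists_eq_add_of_le' hi
  have key : ∀ t : Fin m, ((j + t : Fin m) : ℕ) < n + 2 ∧ ((j + t : Fin m) : ℕ) ≠ 1 ↔
      (t : ℕ) < n + 2 ∧ (t : ℕ) ≠ 1 := by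
    intro t
    have := vadd_mem_vadd_finset_iff (s := pattern m (n + 2)) (b := t) j
    rw [h] at this
    simpa [pattern] using this
  -- For `j ≠ 0`, testing `t = 0, 1, 2` forces `j + 1 = n + 2 = m - 1`, and then `t = m - 1`
  -- forces `m = 4`.
  have h0 := key ⟨0, by omega⟩
  have h1 := key ⟨1, by omega⟩
  have h2 := key ⟨2, by omega⟩
  have h3 := key ⟨m - 1, by omega⟩
  rw [Fin.ext_iff, Fin.val_zero]
  obtain ⟨r, hr⟩ := hodd
  have := j.isLt
  simp only [Fin.val_add_eq_ite] at h0 h1 h2 h3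
  split_ifs at h0 h1 h2 h3 <;> omega

lemma vadd_pattern_eq_pattern (hodd : Odd m) {i i₀ : ℕ} (hi : i < m) (hi₀ : 2 ≤ i₀)
    (hi₀m : i₀ < m) {j : Fin m} (h : j +ᵥ pattern m i = pattern m i₀) : i = i₀ ∧ j = 0 := by
  have hcard := congrArg card h
  rw [card_vadd_finset, card_pattern (by omega) hi, card_pattern (by omega) hi₀m,
    if_neg (show ¬i₀ ≤ 1 by omega)] at hcard
  obtain rfl : i = i₀ := by split_ifs at hcard <;> omega
  exact ⟨rfl, eq_zero_of_vadd_pattern_eq_self hodd hi₀ hi₀m h⟩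

lemma vadd_pattern_eq_pattern_zero (hm : 2 ≤ m) {i : ℕ} (hi : i < m) {j : Fin m}
    (h : j +ᵥ pattern m i = pattern m 0) : (i = 0 ∧ (j : ℕ) = 0) ∨ (i = 1 ∧ (j : ℕ) = 1) := by
  have hcard := congrArg card h
  rw [card_vadd_finset, card_pattern hm hi, card_pattern hm (by omega), if_pos zero_le_one]
    at hcard
  have hi1 : i ≤ 1 := by split_ifs at hcard <;> omega
  have key : ∀ t : Fin m, j + t ∈ pattern m 0 ↔ t ∈ pattern m i := fun t => by
    rw [← h, ← vadd_eq_add, vadd_mem_vadd_finset_iff]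
  have h0 := key ⟨0, by omega⟩
  have h1 := key ⟨1, by omega⟩
  have := j.isLt
  interval_cases i <;> simp [pattern, Fin.val_add_eq_ite] at h0 h1 <;> split_ifs at h0 h1 <;>
    omega

lemma vadd_pattern_one (hm : 2 ≤ m) : (⟨1, hm⟩ : Fin m) +ᵥ pattern m 1 = pattern m 0 := by
  refine eq_of_subset_of_card_le (fun x hx => ?_) ?_
  · obtain ⟨t, ht, rfl⟩ := mem_vadd_finset.mp hx
    simp only [pattern, mem_filter, mem_univ, true_and, vadd_eq_add, Fin.val_add_eq_ite] at ht ⊢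
    split_ifs <;> omega
  · rw [card_vadd_finset, card_pattern hm (by omega), card_pattern hm (by omega)]
    simp

end BitPattern

lemma eq_zero_and_eq_zero_of_forall_eval_eq {K : Type*} [Field K] [Fintype K] {p : K[X]} {c : K}
    (hdeg : p.natDegree < Fintype.card K - 1) (h0 : p.coeff 0 = 0)
    (hc : ∀ u ≠ 0, p.eval u = c) : p = 0 ∧ c = 0 := by
  classical
  have hpc : p - C c = 0 :=
    eq_zero_of_natDegree_lt_card_of_eval_eq_zero' _ (univ.erase 0)
      (fun u hu => by simp [hc u (ne_of_mem_erase hu)])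
      (by rwa [natDegree_sub_C, card_erase_of_mem (mem_univ _), card_univ])
  rw [sub_eq_zero] at hpc
  have hc0 : c = 0 := by simpa [hpc] using h0
  exact ⟨by rw [hpc, hc0, C_0], hc0⟩

section AbsTrace

variable {F : Type*} [Field F] {m : ℕ}

lemma charP_two_of_card_eq_two_pow [Fintype F] (hcard : Fintype.card F = 2 ^ m) : CharP F 2 := by
  have h := FiniteField.cast_card_eq_zero F
  rw [hcard, Nat.cast_pow, Nat.cast_ofNat] at h
  exact CharTwo.of_one_ne_zero_of_two_eq_zero one_ne_zero (eq_zero_of_pow_eq_zero h)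

lemma pos_of_card_eq_two_pow [Fintype F] (hcard : Fintype.card F = 2 ^ m) : 0 < m := by
  have := Fintype.one_lt_card (α := F)
  rw [hcard] at this
  exact Nat.pos_of_ne_zero fun h => by simp [h] at this

variable [CharP F 2]

def absTrace (m : ℕ) : F →+ F := ∑ j ∈ range m, (iterateFrobenius F 2 j).toAddMonoidHom

lemma absTrace_apply (x : F) : absTrace m x = ∑ j ∈ range m, x ^ 2 ^ j := by
  simp [absTrace, iterateFrobenius_def]

lemma absTrace_one : absTrace m (1 : F) = m := by simp [absTrace_apply]

lemma card_le_of_absTrace_eq_zero (hm : 0 < m) {Z : Finset F}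
    (hZ : ∀ x ∈ Z, absTrace m x = 0) : #Z ≤ 2 ^ (m - 1) := by
  set P : F[X] := ∑ j ∈ range m, X ^ 2 ^ j
  have hP : P ≠ 0 := by
    have h1 : P.coeff 1 = 1 := by
      rw [finsetSum_coeff, sum_eq_single_of_mem 0 (mem_range.mpr hm) fun j _ hj => ?_]
      · simp
      · simp [coeff_X_pow, eq_comm (a := 1), hj]
    exact fun h => by simp [h] at h1
  have hdeg : P.natDegree ≤ 2 ^ (m - 1) :=
    natDegree_sum_le_of_forall_le _ _ fun j hj => by
      rw [natDegree_X_pow]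
      exact Nat.pow_le_pow_right two_pos (by rw [mem_range] at hj; omega)
  refine le_trans (card_le_degree_of_subset_roots fun x hx => ?_) hdeg
  rw [mem_roots hP, IsRoot, eval_finsetSum]
  simpa [absTrace_apply] using hZ x hx

lemma sq_add_self_eq_sq_add_self_iff {x s : F} : x ^ 2 + x = s ^ 2 + s ↔ x = s ∨ x = s + 1 := by
  have h2 := CharTwo.two_eq_zero (R := F)
  constructor
  · intro h
    have : (x + s) * (x + s + 1) = 0 := by linear_combination h + (x * s + s ^ 2 + s) * h2
    refine (mul_eq_zero.mp this).imp (fun h => ?_) fun h => ?_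
    · linear_combination h - s * h2
    · linear_combination h - (s + 1) * h2
  · rintro (rfl | rfl)
    · rfl
    · linear_combination (s + 1) * h2

variable [Fintype F]

lemma absTrace_sq (hcard : Fintype.card F = 2 ^ m) (x : F) :
    absTrace m (x ^ 2) = absTrace m x := by
  have h := sum_range_succ' (fun j => x ^ 2 ^ j) m
  rw [sum_range_succ, ← hcard, FiniteField.pow_card, pow_zero, pow_one, add_left_inj] at h
  simp_rw [absTrace_apply, ← pow_mul, ← pow_succ', h]

lemma absTrace_eq_zero_or_one (hcard : Fintype.card F = 2 ^ m) (x : F) :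
    absTrace m x = 0 ∨ absTrace m x = 1 := by
  refine eq_zero_or_one_of_sq_eq_self ?_
  have h : absTrace m x ^ 2 = absTrace m (x ^ 2) := by
    simp_rw [absTrace_apply, sum_pow_char, ← pow_mul, mul_comm]
  rw [h, absTrace_sq hcard]

lemma absTrace_sq_add_self (hcard : Fintype.card F = 2 ^ m) (s : F) :
    absTrace m (s ^ 2 + s) = 0 := by
  rw [map_add, absTrace_sq hcard, CharTwo.add_self_eq_zero]

lemma exists_sq_add_self_eq_of_absTrace_eq_zero (hcard : Fintype.card F = 2 ^ m) {c : F}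
    (hc : absTrace m c = 0) : ∃ s, s ^ 2 + s = c := by
  classical
  set image := univ.image fun s : F => s ^ 2 + s
  set kernel := univ.filter fun x : F => absTrace m x = 0
  have hsub : image ⊆ kernel := by
    simp [image, kernel, subset_iff, absTrace_sq_add_self hcard]
  have hfiber : ∀ y ∈ image, #{s ∈ univ | s ^ 2 + s = y} ≤ 2 := by
    simp only [image, mem_image, mem_univ, true_and, forall_exists_index]
    rintro y s rfl
    refine (card_le_card (t := {s, s + 1}) fun x hx => ?_).trans card_le_two
    simpa [sq_add_self_eq_sq_add_self_iff] using hx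
  have himage : image = kernel := by
    have h1 : 2 ^ m ≤ 2 * #image := by
      simpa [hcard, mul_comm] using card_le_mul_card_image univ 2 hfiber
    have hm := pos_of_card_eq_two_pow hcard
    have h2 : 2 ^ m = 2 * 2 ^ (m - 1) := by rw [← pow_succ']; congr 1; omega
    refine eq_of_subset_of_card_le hsub
      ((card_le_of_absTrace_eq_zero hm fun x hx => (mem_filter.mp hx).2).trans (by omega))
  obtain ⟨s, -, hs⟩ := mem_image.mp (himage ▸ mem_filter.mpr ⟨mem_univ c, hc⟩ : c ∈ image)
  exact ⟨s, hs⟩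

end AbsTrace

section CubePlusAdditive

variable {F : Type*} [Field F] [Fintype F] {m : ℕ}

lemma pow_three_injective (hcard : Fintype.card F = 2 ^ m) (hodd : Odd m) :
    Function.Injective fun x : F => x ^ 3 := by
  classical
  have hcop : (Nat.card Fˣ).Coprime 3 := by
    rw [Nat.card_eq_fintype_card, Fintype.card_units, hcard, Nat.coprime_comm,
      Nat.Prime.coprime_iff_not_dvd Nat.prime_three]
    obtain ⟨k, rfl⟩ := hodd
    have h : 2 ^ (2 * k + 1) % 3 = 2 := by
      rw [pow_succ, pow_mul, Nat.mul_mod, Nat.pow_mod]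
      norm_num
    generalize 2 ^ (2 * k + 1) = N at h ⊢
    omega
  intro x y hxy
  simp only at hxy
  rcases eq_or_ne x 0 with rfl | hx
  · exact (eq_zero_of_pow_eq_zero (hxy.symm.trans (zero_pow three_ne_zero))).symm
  rcases eq_or_ne y 0 with rfl | hy
  · exact eq_zero_of_pow_eq_zero (hxy.trans (zero_pow three_ne_zero))
  have := hcop.pow_left_bijective.injective (a₁ := Units.mk0 x hx) (a₂ := Units.mk0 y hy)
    (Units.ext (by simpa using hxy))
  simpa using congrArg Units.val this

variable [CharP F 2]

lemma bijective_cube_add_of_eq (hcard : Fintype.card F = 2 ^ m) (hodd : Odd m) {L : F → F}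
    {θ : F} (hL : ∀ x, L x = θ ^ 2 * x + θ * x ^ 2) :
    Function.Bijective fun x => x ^ 3 + L x := by
  have hshift : (fun x => x ^ 3 + L x) = (· + θ ^ 3) ∘ (· ^ 3) ∘ (· + θ) := by
    funext x
    simp only [Function.comp_apply, hL]
    linear_combination -(θ * x ^ 2 + θ ^ 2 * x + θ ^ 3) * CharTwo.two_eq_zero (R := F)
  rw [hshift]
  exact (Equiv.addRight _).bijective.comp
    ((Finite.injective_iff_bijective.mp (pow_three_injective hcard hodd)).comp
      (Equiv.addRight _).bijective)

lemma absTrace_eq_one_of_injective (hcard : Fintype.card F = 2 ^ m) (L : F →+ F)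
    (hf : Function.Injective fun x => x ^ 3 + L x) {u : F} (hu : u ≠ 0) :
    absTrace m ((u ^ 3 + L u) / u ^ 3) = 1 := by
  refine (absTrace_eq_zero_or_one hcard _).resolve_left fun h => ?_
  obtain ⟨s, hs⟩ := exists_sq_add_self_eq_of_absTrace_eq_zero hcard h
  have hs' : u ^ 3 * (s ^ 2 + s) = u ^ 3 + L u := by
    rw [hs]; field_simp
  -- `(us + u)³ - (us)³ = u³ (s² + s + 1)`, which is `L u` in characteristic 2
  have hcollide : (u * s + u) ^ 3 + L (u * s + u) = (u * s) ^ 3 + L (u * s) := by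
    rw [map_add]
    linear_combination
      hs' + (u ^ 3 * s ^ 2 + u ^ 3 * s + u ^ 3 + L u) * CharTwo.two_eq_zero (R := F)
  exact hu (by simpa using hf hcollide)

end CubePlusAdditive

section TracePolynomial

variable {F : Type*} [Field F] {m : ℕ}

-- `bitVal (j +ᵥ pattern m i)` represents `2 ^ j (2 ^ i - 3)` modulo `2 ^ m - 1`.
noncomputable def tracePoly (a : Fin m → F) : F[X] :=
  ∑ p : Fin m × Fin m, C (a p.1 ^ 2 ^ (p.2 : ℕ)) * X ^ bitVal (p.2 +ᵥ pattern m p.1)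

lemma coeff_tracePoly_zero (hm : 2 ≤ m) (a : Fin m → F) : (tracePoly a).coeff 0 = 0 := by
  simp only [tracePoly, finsetSum_coeff, coeff_C_mul, coeff_X_pow]
  refine sum_eq_zero fun p _ => ?_
  rw [if_neg (bitVal_pos (vadd_finset_nonempty.mpr (pattern_nonempty hm p.1.isLt))).ne, mul_zero]

lemma coeff_tracePoly_bitVal_pattern (a : Fin m → F) (i₀ : ℕ) :
    (tracePoly a).coeff (bitVal (pattern m i₀)) =
      ∑ p : Fin m × Fin m with p.2 +ᵥ pattern m p.1 = pattern m i₀, a p.1 ^ 2 ^ (p.2 : ℕ) := by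
  simp only [tracePoly, finsetSum_coeff, coeff_C_mul, coeff_X_pow, bitVal_injective.eq_iff,
    mul_ite, mul_one, mul_zero, sum_filter]
  exact sum_congr rfl fun p _ => if_congr eq_comm rfl rfl

variable [NeZero m]

lemma natDegree_tracePoly_lt (hm : 2 ≤ m) (a : Fin m → F) :
    (tracePoly a).natDegree < 2 ^ m - 1 := by
  have h2 : 2 ≤ 2 ^ m := Nat.le_self_pow (by omega) 2
  have hle : ∀ p ∈ (univ : Finset (Fin m × Fin m)),
      (C (a p.1 ^ 2 ^ (p.2 : ℕ)) * X ^ bitVal (p.2 +ᵥ pattern m p.1)).natDegree ≤ 2 ^ m - 2 := by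
    intro p _
    have hne : p.2 +ᵥ pattern m p.1 ≠ univ := by
      rw [Ne, vadd_finset_eq_univ]
      exact pattern_ne_univ hm p.1.isLt
    have := bitVal_lt hne
    exact (natDegree_C_mul_X_pow_le _ _).trans (by omega)
  exact (natDegree_sum_le_of_forall_le _ _ hle).trans_lt (by omega)

lemma eq_zero_of_tracePoly_eq_zero (hodd : Odd m) {a : Fin m → F} (h : tracePoly a = 0)
    {i : Fin m} (hi : 2 ≤ (i : ℕ)) : a i = 0 := by
  have hfiber : ({p : Fin m × Fin m | p.2 +ᵥ pattern m p.1 = pattern m i} : Finset _) =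
      {(i, 0)} := by
    ext ⟨i', j'⟩
    simp only [mem_filter, mem_univ, true_and, mem_singleton, Prod.mk.injEq]
    constructor
    · intro hp
      obtain ⟨h1, h2⟩ := vadd_pattern_eq_pattern hodd i'.isLt hi i.isLt hp
      exact ⟨Fin.ext h1, h2⟩
    · rintro ⟨rfl, rfl⟩
      exact zero_vadd _ _
  have hc := coeff_tracePoly_bitVal_pattern a i
  rw [h, coeff_zero, hfiber, sum_singleton] at hc
  simpa using hc.symm

lemma add_sq_eq_zero_of_tracePoly_eq_zero (hm : 2 ≤ m) {a : Fin m → F} (h : tracePoly a = 0) :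
    a ⟨0, by omega⟩ + a ⟨1, hm⟩ ^ 2 = 0 := by
  have hfiber : ({p : Fin m × Fin m | p.2 +ᵥ pattern m p.1 = pattern m 0} : Finset _) =
      {(⟨0, by omega⟩, ⟨0, by omega⟩), (⟨1, hm⟩, ⟨1, hm⟩)} := by
    ext ⟨i, j⟩
    simp only [mem_filter, mem_univ, true_and, mem_insert, mem_singleton, Prod.mk.injEq]
    constructor
    · intro hp
      rcases vadd_pattern_eq_pattern_zero hm i.isLt hp with ⟨hi, hj⟩ | ⟨hi, hj⟩
      · exact Or.inl ⟨Fin.ext hi, Fin.ext hj⟩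
      · exact Or.inr ⟨Fin.ext hi, Fin.ext hj⟩
    · rintro (⟨rfl, rfl⟩ | ⟨rfl, rfl⟩)
      · exact zero_vadd _ _
      · exact vadd_pattern_one hm
  have hc := coeff_tracePoly_bitVal_pattern a 0
  rw [h, coeff_zero, hfiber, sum_pair (by simp [Fin.ext_iff])] at hc
  simpa using hc.symm

variable [Fintype F] in
lemma pow_bitVal_vadd_pattern (hcard : Fintype.card F = 2 ^ m) (hm : 2 ≤ m) {u : F}
    (hu : u ≠ 0) {i : ℕ} (hi : i < m) (j : Fin m) :
    u ^ bitVal (j +ᵥ pattern m i) = (u ^ 2 ^ i / u ^ 3) ^ 2 ^ (j : ℕ) := by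
  have h : bitVal (j +ᵥ pattern m i) + 3 * 2 ^ (j : ℕ) ≡ 2 ^ i * 2 ^ (j : ℕ) [MOD 2 ^ m - 1] :=
    calc bitVal (j +ᵥ pattern m i) + 3 * 2 ^ (j : ℕ)
        ≡ 2 ^ (j : ℕ) * bitVal (pattern m i) + 3 * 2 ^ (j : ℕ) [MOD 2 ^ m - 1] :=
          (bitVal_vadd_modEq j _).add_right _
      _ = 2 ^ (j : ℕ) * (bitVal (pattern m i) + 3) := by ring
      _ ≡ 2 ^ (j : ℕ) * 2 ^ i [MOD 2 ^ m - 1] :=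
          (bitVal_pattern_add_three_modEq hm hi).mul_left _
      _ = 2 ^ i * 2 ^ (j : ℕ) := mul_comm _ _
  rw [div_pow, eq_div_iff (pow_ne_zero _ (pow_ne_zero _ hu)), ← pow_mul, ← pow_mul, ← pow_add]
  exact pow_eq_pow_of_modEq h (by rw [← hcard]; exact FiniteField.pow_card_sub_one_eq_one u hu)

variable [CharP F 2]

def linearized (a : Fin m → F) : F →+ F where
  toFun x := ∑ i, a i * x ^ 2 ^ (i : ℕ)
  map_zero' := by simp
  map_add' x y := by simp [add_pow_char_pow, mul_add, sum_add_distrib]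

lemma linearized_apply (a : Fin m → F) (x : F) :
    linearized a x = ∑ i, a i * x ^ 2 ^ (i : ℕ) :=
  rfl

lemma exists_linearized_eq_of_tracePoly_eq_zero (hodd : Odd m) (hm : 2 ≤ m) {a : Fin m → F}
    (ha : a ≠ 0) (h : tracePoly a = 0) :
    ∃ θ : F, θ ≠ 0 ∧ ∀ x, linearized a x = θ ^ 2 * x + θ * x ^ 2 := by
  set i₀ : Fin m := ⟨0, by omega⟩
  set i₁ : Fin m := ⟨1, hm⟩
  have hzero : ∀ i, i ≠ i₀ ∧ i ≠ i₁ → a i = 0 := fun i ⟨hi₀, hi₁⟩ =>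
    eq_zero_of_tracePoly_eq_zero hodd h <| by
      have h0 : (i : ℕ) ≠ 0 := fun h => hi₀ (Fin.ext h)
      have h1 : (i : ℕ) ≠ 1 := fun h => hi₁ (Fin.ext h)
      omega
  have h01 : a i₀ = a i₁ ^ 2 := CharTwo.add_eq_zero.mp (add_sq_eq_zero_of_tracePoly_eq_zero hm h)
  refine ⟨a i₁, fun hθ => ha ?_, fun x => ?_⟩
  · ext i
    by_cases hi₀ : i = i₀
    · rw [hi₀, h01, hθ, Pi.zero_apply, zero_pow two_ne_zero]
    by_cases hi₁ : i = i₁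
    · rw [hi₁, hθ, Pi.zero_apply]
    exact hzero i ⟨hi₀, hi₁⟩
  · rw [linearized_apply, Fintype.sum_eq_add i₀ i₁ (by simp [i₀, i₁, Fin.ext_iff])
      fun i hi => by rw [hzero i hi, zero_mul], h01]
    simp [i₀, i₁]

variable [Fintype F]

lemma eval_tracePoly (hcard : Fintype.card F = 2 ^ m) (hm : 2 ≤ m) (a : Fin m → F) {u : F}
    (hu : u ≠ 0) : (tracePoly a).eval u = absTrace m (linearized a u / u ^ 3) := by
  rw [absTrace_apply, ← Fin.sum_univ_eq_sum_range (fun j => (linearized a u / u ^ 3) ^ 2 ^ j),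
    tracePoly, eval_finsetSum, Fintype.sum_prod_type, sum_comm]
  refine sum_congr rfl fun j _ => ?_
  rw [linearized_apply, sum_div, sum_pow_char_pow]
  refine sum_congr rfl fun i _ => ?_
  rw [eval_mul, eval_C, eval_pow, eval_X, pow_bitVal_vadd_pattern hcard hm hu i.isLt,
    mul_div_assoc, mul_pow]

lemma odd_and_tracePoly_eq_zero_of_injective (hcard : Fintype.card F = 2 ^ m) (hm : 2 ≤ m)
    (a : Fin m → F) (hf : Function.Injective fun x => x ^ 3 + linearized a x) :
    Odd m ∧ tracePoly a = 0 := by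
  have hvals : ∀ u ≠ 0, (tracePoly a).eval u = 1 + m := fun u hu => by
    have h := absTrace_eq_one_of_injective hcard (linearized a) hf hu
    rw [add_div, div_self (pow_ne_zero 3 hu), map_add, absTrace_one] at h
    rw [eval_tracePoly hcard hm a hu]
    linear_combination h - (m : F) * CharTwo.two_eq_zero (R := F)
  obtain ⟨hQ, hc⟩ := eq_zero_and_eq_zero_of_forall_eval_eq
    (by rw [hcard]; exact natDegree_tracePoly_lt hm a) (coeff_tracePoly_zero hm a) hvals
  refine ⟨Nat.not_even_iff_odd.mp fun he => ?_, hQ⟩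
  simp [CharTwo.natCast_eq_ite, he] at hc

end TracePolynomial

theorem stmt_19_general {F : Type*} [Field F] [Fintype F] (m : ℕ)
    (hcard : Fintype.card F = 2 ^ m) (a : Fin m → F) (ha : a ≠ 0) :
    Function.Bijective (fun x : F => x ^ 3 + ∑ i : Fin m, a i * x ^ 2 ^ (i : ℕ)) ↔
      (Odd m ∧ ∃ θ : F, θ ≠ 0 ∧
        ∀ x : F, (∑ i : Fin m, a i * x ^ 2 ^ (i : ℕ)) = θ ^ 2 * x + θ * x ^ 2) := by
  have := charP_two_of_card_eq_two_pow hcard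
  have hm := pos_of_card_eq_two_pow hcard
  have : NeZero m := ⟨hm.ne'⟩
  simp_rw [← linearized_apply a]
  constructor
  · intro hf
    obtain rfl | hm2 : m = 1 ∨ 2 ≤ m := by omega
    · -- over `𝔽₂` the trace is the identity, so `u = 1` gives `a 0 = L 1 = 0`
      have h1 := absTrace_eq_one_of_injective hcard (linearized a) hf.1 one_ne_zero
      simp only [absTrace_apply, linearized_apply, range_one, sum_singleton, univ_unique,
        Fin.default_eq_zero, Fin.val_eq_zero, one_pow, pow_zero, pow_one, mul_one, div_one,
        add_eq_left] at h1
      exact (ha (funext fun i => by rwa [Subsingleton.elim i 0])).elim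
    obtain ⟨hodd, hQ⟩ := odd_and_tracePoly_eq_zero_of_injective hcard hm2 a hf.1
    exact ⟨hodd, exists_linearized_eq_of_tracePoly_eq_zero hodd hm2 ha hQ⟩
  · rintro ⟨hodd, θ, -, hθ⟩
    exact bijective_cube_add_of_eq hcard hodd hθ

/-- For a nonzero linearized polynomial L(x) = Σ aᵢ x^{2ⁱ} over 𝔽_{2^m}, the map
x ↦ x³ + L(x) permutes 𝔽_{2^m} iff m is odd and L(x) = θ²x + θx² for some θ ≠ 0. -/
theorem stmt_19 {F : Type*} [Field F] [Fintype F] (m : ℕ) (hm : 0 < m)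
    (hcard : Fintype.card F = 2 ^ m) (a : Fin m → F) (ha : a ≠ 0) :
    Function.Bijective (fun x : F => x ^ 3 + ∑ i : Fin m, a i * x ^ 2 ^ (i : ℕ)) ↔
      (Odd m ∧ ∃ θ : F, θ ≠ 0 ∧
        ∀ x : F, (∑ i : Fin m, a i * x ^ 2 ^ (i : ℕ)) = θ ^ 2 * x + θ * x ^ 2) :=
  stmt_19_general m hcard a ha
end
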